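/- arXiv:1601.02527 — 8 statements merged into one kernel-verified Lean document; each statement's English description precedes it below -/
import Mathlib

section
/- Fix an integer n ≥ 2, reals p_1,…,p_n with p_k ≥ 1, and reals σ_1,…,σ_n with η_n^1 := min_k σ_k < η_n^2 := max_k σ_k. Let (u,v) ∈ ℝ² with u > 0 and η_n^1·u < v < η_n^2·u. Then the problem of minimizing Σ_{k=1}^n p_k · E_MB(u_k/p_k) over tuples (u_1,…,u_n) of nonnegative reals satisfying Σ_{k=1}^n u_k = u and Σ_{k=1}^n σ_k u_k = v has a unique optimal solution (ū_1,…,ū_n); moreover ū_k > 0 for every k, and there exist unique reals a, b such that ln(ū_k/p_k) = a + b·σ_k for every k ∈ {1,…,n}. -/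
/-- The (real-valued restriction of the) Maxwell–Boltzmann entropy:
`E_MB(u) = u (ln u − 1)` (with `Real.log 0 = 0`, so the convention `0 · ln 0 := 0` holds). -/
noncomputable def EMBr (u : ℝ) : ℝ := u * (Real.log u - 1)

/-- Feasible tuples: nonnegative with `Σ u_k = u` and `Σ σ_k u_k = v`. -/
def FeasFin {n : ℕ} (σ : Fin n → ℝ) (u v : ℝ) (w : Fin n → ℝ) : Prop :=
  (∀ k, 0 ≤ w k) ∧ (∑ k, w k) = u ∧ (∑ k, σ k * w k) = v

/-- The Maxwell–Boltzmann objective `Σ p_k E_MB(u_k/p_k)`. -/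
noncomputable def objMBFin {n : ℕ} (p : Fin n → ℝ) (w : Fin n → ℝ) : ℝ :=
  ∑ k, p k * EMBr (w k / p k)

/-- `w` is an optimal solution of the finite Maxwell–Boltzmann entropy minimization problem. -/
def IsOptMBFin {n : ℕ} (p σ : Fin n → ℝ) (u v : ℝ) (w : Fin n → ℝ) : Prop :=
  FeasFin σ u v w ∧ ∀ w', FeasFin σ u v w' → objMBFin p w ≤ objMBFin p w'

/-- Convexity inequality: `E(x) ≥ E(y) + log y (x - y)` for `x ≥ 0`, `y > 0`. -/
lemma embr_ge (x y : ℝ) (hx : 0 ≤ x) (hy : 0 < y) :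
    EMBr y + Real.log y * (x - y) ≤ EMBr x := by
  rcases eq_or_lt_of_le hx with h | h
  · simp only [EMBr, ← h]
    nlinarith [hy]
  · have h1 := Real.log_le_sub_one_of_pos (show 0 < y / x by positivity)
    have hld : Real.log (y / x) = Real.log y - Real.log x := Real.log_div hy.ne' h.ne'
    rw [hld] at h1
    have h2 : x * (Real.log y - Real.log x) ≤ x * (y / x - 1) :=
      mul_le_mul_of_nonneg_left h1 h.le
    have h3 : x * (y / x - 1) = y - x := by field_simp
    simp only [EMBr]
    nlinarith [h2, h3]

/-- Strict convexity inequality. -/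
lemma embr_gt (x y : ℝ) (hx : 0 ≤ x) (hy : 0 < y) (hxy : x ≠ y) :
    EMBr y + Real.log y * (x - y) < EMBr x := by
  rcases eq_or_lt_of_le hx with h | h
  · simp only [EMBr, ← h]
    nlinarith [hy]
  · have hne : y / x ≠ 1 := by
      intro hc
      exact hxy (by field_simp at hc; linarith)
    have h1 := Real.log_lt_sub_one_of_pos (show 0 < y / x by positivity) hne
    have hld : Real.log (y / x) = Real.log y - Real.log x := Real.log_div hy.ne' h.ne'
    rw [hld] at h1
    have h2 : x * (Real.log y - Real.log x) < x * (y / x - 1) :=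
      mul_lt_mul_of_pos_left h1 h
    have h3 : x * (y / x - 1) = y - x := by field_simp
    simp only [EMBr]
    nlinarith [h2, h3]

set_option maxHeartbeats 1600000 in
theorem stmt1 (n : ℕ) (hn : 2 ≤ n) (p σ : Fin n → ℝ) (hp : ∀ k, 1 ≤ p k)
    (η₁ η₂ : ℝ) (hη₁ : IsLeast (Set.range σ) η₁) (hη₂ : IsGreatest (Set.range σ) η₂)
    (hlt : η₁ < η₂) (u v : ℝ) (hu : 0 < u) (hv1 : η₁ * u < v) (hv2 : v < η₂ * u) :
    ∃ wbar : Fin n → ℝ, IsOptMBFin p σ u v wbar ∧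
      (∀ w, IsOptMBFin p σ u v w → w = wbar) ∧
      (∀ k, 0 < wbar k) ∧
      (∃! ab : ℝ × ℝ, ∀ k, Real.log (wbar k / p k) = ab.1 + ab.2 * σ k) := by
  classical
  obtain ⟨k₁, hk₁⟩ := hη₁.1
  obtain ⟨k₂, hk₂⟩ := hη₂.1
  have hσ₁ : ∀ k, η₁ ≤ σ k := fun k => hη₁.2 ⟨k, rfl⟩
  have hσ₂ : ∀ k, σ k ≤ η₂ := fun k => hη₂.2 ⟨k, rfl⟩
  have hp0 : ∀ k, 0 < p k := fun k => lt_of_lt_of_le one_pos (hp k)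
  set Z : ℝ → ℝ := fun c => ∑ k, p k * Real.exp (c * σ k) with hZ
  set N : ℝ → ℝ := fun c => ∑ k, σ k * p k * Real.exp (c * σ k) with hN
  have hZpos : ∀ c, 0 < Z c := fun c =>
    Finset.sum_pos (fun k _ => mul_pos (hp0 k) (Real.exp_pos _)) ⟨k₁, Finset.mem_univ k₁⟩
  set P : ℝ := ∑ k, p k with hP
  have hPpos : 0 < P :=
    Finset.sum_pos (fun k _ => hp0 k) ⟨k₁, Finset.mem_univ k₁⟩
  have hr1 : η₁ < v / u := (lt_div_iff₀ hu).2 hv1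
  have hr2 : v / u < η₂ := (div_lt_iff₀ hu).2 hv2
  set ε : ℝ := min (η₂ - v / u) (v / u - η₁) with hε
  have hεpos : 0 < ε := lt_min (by linarith) (by linarith)
  set B : ℝ := P / ε + 1 with hB
  have hBpos : 0 < B := by positivity
  have hPB : P / B < ε := by
    rw [div_lt_iff₀ hBpos, hB]
    have hc : P / ε * ε = P := div_mul_cancel₀ _ hεpos.ne'
    nlinarith [hc, hεpos]
  -- elementary exponential bound
  have texp : ∀ t c : ℝ, 0 ≤ t → 0 < c → t * Real.exp (-(c * t)) ≤ 1 / c := by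
    intro t c ht hc
    have h1 : c * t ≤ Real.exp (c * t) := by nlinarith [Real.add_one_le_exp (c * t)]
    rw [Real.exp_neg, ← div_eq_mul_inv, div_le_div_iff₀ (Real.exp_pos _) hc]
    linarith
  -- upper endpoint bound
  have hgB : η₂ - P / B ≤ N B / Z B := by
    have hZlow : Real.exp (B * η₂) ≤ Z B := by
      have h1 : p k₂ * Real.exp (B * σ k₂) ≤ Z B :=
        Finset.single_le_sum (f := fun k => p k * Real.exp (B * σ k))
          (fun k _ => (mul_pos (hp0 k) (Real.exp_pos _)).le) (Finset.mem_univ k₂)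
      rw [hk₂] at h1
      nlinarith [Real.exp_pos (B * η₂), hp k₂]
    have hterm : ∀ k, (η₂ - σ k) * (p k * Real.exp (B * σ k)) ≤
        p k * (1 / B * Real.exp (B * η₂)) := by
      intro k
      have ht : 0 ≤ η₂ - σ k := by linarith [hσ₂ k]
      have he : Real.exp (B * σ k) = Real.exp (-(B * (η₂ - σ k))) * Real.exp (B * η₂) := by
        rw [← Real.exp_add]; ring_nf
      have h2 := texp (η₂ - σ k) B ht hBpos
      calc (η₂ - σ k) * (p k * Real.exp (B * σ k))
          = p k * (((η₂ - σ k) * Real.exp (-(B * (η₂ - σ k)))) * Real.exp (B * η₂)) := by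
            rw [he]; ring
        _ ≤ p k * (1 / B * Real.exp (B * η₂)) := by
            refine mul_le_mul_of_nonneg_left ?_ (hp0 k).le
            exact mul_le_mul_of_nonneg_right h2 (Real.exp_pos _).le
    have e1 : η₂ * Z B - N B = ∑ k, (η₂ - σ k) * (p k * Real.exp (B * σ k)) := by
      simp only [hZ, hN, Finset.mul_sum, ← Finset.sum_sub_distrib]
      exact Finset.sum_congr rfl fun k _ => by ring
    have hsum : η₂ * Z B - N B ≤ P / B * Real.exp (B * η₂) := by
      calc η₂ * Z B - N B = ∑ k, (η₂ - σ k) * (p k * Real.exp (B * σ k)) := e1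
        _ ≤ ∑ k, p k * (1 / B * Real.exp (B * η₂)) := Finset.sum_le_sum fun k _ => hterm k
        _ = P / B * Real.exp (B * η₂) := by rw [← Finset.sum_mul, ← hP]; ring
    rw [le_div_iff₀ (hZpos B)]
    have h4 : P / B * Real.exp (B * η₂) ≤ P / B * Z B :=
      mul_le_mul_of_nonneg_left hZlow (by positivity)
    nlinarith [hsum, h4]
  -- lower endpoint bound
  have hgmB : N (-B) / Z (-B) ≤ η₁ + P / B := by
    have hZlow : Real.exp (-B * η₁) ≤ Z (-B) := by
      have h1 : p k₁ * Real.exp (-B * σ k₁) ≤ Z (-B) :=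
        Finset.single_le_sum (f := fun k => p k * Real.exp (-B * σ k))
          (fun k _ => (mul_pos (hp0 k) (Real.exp_pos _)).le) (Finset.mem_univ k₁)
      rw [hk₁] at h1
      nlinarith [Real.exp_pos (-B * η₁), hp k₁]
    have hterm : ∀ k, (σ k - η₁) * (p k * Real.exp (-B * σ k)) ≤
        p k * (1 / B * Real.exp (-B * η₁)) := by
      intro k
      have ht : 0 ≤ σ k - η₁ := by linarith [hσ₁ k]
      have he : Real.exp (-B * σ k) = Real.exp (-(B * (σ k - η₁))) * Real.exp (-B * η₁) := by
        rw [← Real.exp_add]; ring_nf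
      have h2 := texp (σ k - η₁) B ht hBpos
      calc (σ k - η₁) * (p k * Real.exp (-B * σ k))
          = p k * (((σ k - η₁) * Real.exp (-(B * (σ k - η₁)))) * Real.exp (-B * η₁)) := by
            rw [he]; ring
        _ ≤ p k * (1 / B * Real.exp (-B * η₁)) := by
            refine mul_le_mul_of_nonneg_left ?_ (hp0 k).le
            exact mul_le_mul_of_nonneg_right h2 (Real.exp_pos _).le
    have e1 : N (-B) - η₁ * Z (-B) = ∑ k, (σ k - η₁) * (p k * Real.exp (-B * σ k)) := by
      simp only [hZ, hN, Finset.mul_sum, ← Finset.sum_sub_distrib]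
      exact Finset.sum_congr rfl fun k _ => by ring
    have hsum : N (-B) - η₁ * Z (-B) ≤ P / B * Real.exp (-B * η₁) := by
      calc N (-B) - η₁ * Z (-B) = ∑ k, (σ k - η₁) * (p k * Real.exp (-B * σ k)) := e1
        _ ≤ ∑ k, p k * (1 / B * Real.exp (-B * η₁)) := Finset.sum_le_sum fun k _ => hterm k
        _ = P / B * Real.exp (-B * η₁) := by rw [← Finset.sum_mul, ← hP]; ring
    rw [div_le_iff₀ (hZpos (-B))]
    have h4 : P / B * Real.exp (-B * η₁) ≤ P / B * Z (-B) :=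
      mul_le_mul_of_nonneg_left hZlow (by positivity)
    nlinarith [hsum, h4]
  -- intermediate value theorem
  have hcont : Continuous fun c => N c / Z c := by
    apply Continuous.div
    · simp only [hN]; fun_prop
    · simp only [hZ]; fun_prop
    · exact fun c => (hZpos c).ne'
  have hεle1 : ε ≤ η₂ - v / u := min_le_left _ _
  have hεle2 : ε ≤ v / u - η₁ := min_le_right _ _
  obtain ⟨b, -, hgb⟩ := intermediate_value_Icc (by linarith : -B ≤ B) hcont.continuousOn
    (Set.mem_Icc.2 ⟨by show N (-B) / Z (-B) ≤ v / u; linarith,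
      by show v / u ≤ N B / Z B; linarith⟩)
  have hNb : N b = v / u * Z b := by
    rw [div_eq_iff (hZpos b).ne'] at hgb
    exact hgb
  -- the optimal point
  set a : ℝ := Real.log (u / Z b) with ha
  have hexpa : Real.exp a = u / Z b := Real.exp_log (div_pos hu (hZpos b))
  set wbar : Fin n → ℝ := fun k => p k * Real.exp (a + b * σ k) with hwbar
  have hwpos : ∀ k, 0 < wbar k := fun k => mul_pos (hp0 k) (Real.exp_pos _)
  have hdivw : ∀ k, wbar k / p k = Real.exp (a + b * σ k) := by
    intro k
    have e0 : wbar k = p k * Real.exp (a + b * σ k) := rfl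
    rw [e0, mul_comm, mul_div_assoc, div_self (hp0 k).ne', mul_one]
  have hlogw : ∀ k, Real.log (wbar k / p k) = a + b * σ k := by
    intro k
    rw [hdivw k, Real.log_exp]
  have hZb : Z b = ∑ k, p k * Real.exp (b * σ k) := rfl
  have hNb' : N b = ∑ k, σ k * p k * Real.exp (b * σ k) := rfl
  have hsum1 : ∑ k, wbar k = u := by
    have e : ∀ k, wbar k = Real.exp a * (p k * Real.exp (b * σ k)) := by
      intro k
      have e0 : wbar k = p k * Real.exp (a + b * σ k) := rfl
      rw [e0, Real.exp_add]; ring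
    rw [Finset.sum_congr rfl fun k _ => e k, ← Finset.mul_sum, ← hZb, hexpa]
    field_simp [(hZpos b).ne']
  have hsum2 : ∑ k, σ k * wbar k = v := by
    have e : ∀ k, σ k * wbar k = Real.exp a * (σ k * p k * Real.exp (b * σ k)) := by
      intro k
      have e0 : wbar k = p k * Real.exp (a + b * σ k) := rfl
      rw [e0, Real.exp_add]; ring
    rw [Finset.sum_congr rfl fun k _ => e k, ← Finset.mul_sum, ← hNb', hexpa, hNb]
    field_simp [(hZpos b).ne', hu.ne']
  have hfeas : FeasFin σ u v wbar := ⟨fun k => (hwpos k).le, hsum1, hsum2⟩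
  -- the linear part vanishes on feasible differences
  have hzero : ∀ w : Fin n → ℝ, FeasFin σ u v w →
      ∑ k, (a + b * σ k) * (w k - wbar k) = 0 := by
    intro w hw
    have e : ∑ k, (a + b * σ k) * (w k - wbar k)
        = (a * ∑ k, w k + b * ∑ k, σ k * w k)
          - (a * ∑ k, wbar k + b * ∑ k, σ k * wbar k) := by
      rw [Finset.mul_sum, Finset.mul_sum, Finset.mul_sum, Finset.mul_sum,
        ← Finset.sum_add_distrib, ← Finset.sum_add_distrib, ← Finset.sum_sub_distrib]
      exact Finset.sum_congr rfl fun k _ => by ring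
    rw [e, hw.2.1, hw.2.2, hsum1, hsum2]
    ring
  -- termwise inequalities
  have hterm_le : ∀ (w : Fin n → ℝ), (∀ k, 0 ≤ w k) → ∀ k,
      p k * EMBr (wbar k / p k) + (a + b * σ k) * (w k - wbar k) ≤
        p k * EMBr (w k / p k) := by
    intro w hw0 k
    have hx : 0 ≤ w k / p k := div_nonneg (hw0 k) (hp0 k).le
    have hy : 0 < wbar k / p k := div_pos (hwpos k) (hp0 k)
    have h := mul_le_mul_of_nonneg_left (embr_ge (w k / p k) (wbar k / p k) hx hy) (hp0 k).le
    have hpxy : p k * (w k / p k - wbar k / p k) = w k - wbar k := by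
      field_simp [(hp0 k).ne']
    calc p k * EMBr (wbar k / p k) + (a + b * σ k) * (w k - wbar k)
        = p k * (EMBr (wbar k / p k) +
            Real.log (wbar k / p k) * (w k / p k - wbar k / p k)) := by
          rw [hlogw k]; linear_combination (-(a + b * σ k)) * hpxy
      _ ≤ p k * EMBr (w k / p k) := h
  have hterm_lt : ∀ (w : Fin n → ℝ), (∀ k, 0 ≤ w k) → ∀ k, w k ≠ wbar k →
      p k * EMBr (wbar k / p k) + (a + b * σ k) * (w k - wbar k) <
        p k * EMBr (w k / p k) := by
    intro w hw0 k hne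
    have hx : 0 ≤ w k / p k := div_nonneg (hw0 k) (hp0 k).le
    have hy : 0 < wbar k / p k := div_pos (hwpos k) (hp0 k)
    have hxy : w k / p k ≠ wbar k / p k := by
      intro hc
      apply hne
      field_simp [(hp0 k).ne'] at hc
      exact hc
    have h := mul_lt_mul_of_pos_left (embr_gt (w k / p k) (wbar k / p k) hx hy hxy) (hp0 k)
    have hpxy : p k * (w k / p k - wbar k / p k) = w k - wbar k := by
      field_simp [(hp0 k).ne']
    calc p k * EMBr (wbar k / p k) + (a + b * σ k) * (w k - wbar k)
        = p k * (EMBr (wbar k / p k) +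
            Real.log (wbar k / p k) * (w k / p k - wbar k / p k)) := by
          rw [hlogw k]; linear_combination (-(a + b * σ k)) * hpxy
      _ < p k * EMBr (w k / p k) := h
  -- optimality
  have hopt : ∀ w, FeasFin σ u v w → objMBFin p wbar ≤ objMBFin p w := by
    intro w hw
    have h1 : ∑ k, (p k * EMBr (wbar k / p k) + (a + b * σ k) * (w k - wbar k)) ≤
        ∑ k, p k * EMBr (w k / p k) :=
      Finset.sum_le_sum fun k _ => hterm_le w hw.1 k
    rw [Finset.sum_add_distrib, hzero w hw] at h1
    simpa [objMBFin] using h1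
  have hstrict : ∀ w, FeasFin σ u v w → w ≠ wbar → objMBFin p wbar < objMBFin p w := by
    intro w hw hne
    obtain ⟨k0, hk0⟩ : ∃ k, w k ≠ wbar k := by
      by_contra hcon; push_neg at hcon; exact hne (funext hcon)
    have h1 : ∑ k, (p k * EMBr (wbar k / p k) + (a + b * σ k) * (w k - wbar k)) <
        ∑ k, p k * EMBr (w k / p k) :=
      Finset.sum_lt_sum (fun k _ => hterm_le w hw.1 k)
        ⟨k0, Finset.mem_univ _, hterm_lt w hw.1 k0 hk0⟩
    rw [Finset.sum_add_distrib, hzero w hw] at h1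
    simpa [objMBFin] using h1
  refine ⟨wbar, ⟨hfeas, hopt⟩, ?_, hwpos, ⟨(a, b), fun k => hlogw k, ?_⟩⟩
  · intro w hwopt
    by_contra hne
    have h1 := hwopt.2 wbar hfeas
    have h2 := hstrict w hwopt.1 hne
    linarith
  · rintro ⟨a', b'⟩ hab'
    have e1 : a' + b' * σ k₁ = a + b * σ k₁ := (hab' k₁).symm.trans (hlogw k₁)
    have e2 : a' + b' * σ k₂ = a + b * σ k₂ := (hab' k₂).symm.trans (hlogw k₂)
    rw [hk₁] at e1
    rw [hk₂] at e2
    have hb : b' = b := by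
      have h3 : (b' - b) * (η₂ - η₁) = 0 := by linear_combination e2 - e1
      rcases mul_eq_zero.1 h3 with h | h
      · linarith
      · exfalso; linarith
    have ha' : a' = a := by rw [hb] at e1; linarith
    rw [ha', hb]
end

section
/- Fix an integer n ≥ 2, reals p_1,…,p_n with p_k ≥ 1, and reals σ_1,…,σ_n with η_n^1 := min_k σ_k < η_n^2 := max_k σ_k. Let u > 0 and v = η_n^i·u for some i ∈ {1,2}, and set Σ_i := {k ∈ {1,…,n} : σ_k = η_n^i} (which is nonempty). Then the problem of minimizing Σ_{k=1}^n p_k · E_MB(u_k/p_k) over tuples (u_1,…,u_n) of nonnegative reals satisfying Σ_{k=1}^n u_k = u and Σ_{k=1}^n σ_k u_k = v has a unique optimal solution (ū_1,…,ū_n), given by ū_k = u·p_k / (Σ_{l∈Σ_i} p_l) for k ∈ Σ_i and ū_k = 0 for k ∉ Σ_i. -/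
open scoped Classical

/-- The explicit candidate solution when `v = η u` with `η` the min or max of the `σ_k`:
`ū_k = u p_k / Σ_{l ∈ Σ_i} p_l` for `σ_k = η` and `ū_k = 0` otherwise. -/
noncomputable def wExtreme {n : ℕ} (p σ : Fin n → ℝ) (η u : ℝ) : Fin n → ℝ :=
  fun k => if σ k = η then u * p k / (∑ l ∈ Finset.univ.filter fun l => σ l = η, p l) else 0

lemma embr_key (x c : ℝ) (hx : 0 ≤ x) (hc : 0 < c) :
    Real.log c * (x - c) + EMBr c ≤ EMBr x ∧
    (x ≠ c → Real.log c * (x - c) + EMBr c < EMBr x) := by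
  rcases eq_or_lt_of_le hx with h0 | hx'
  · have hx0 : x = 0 := h0.symm
    subst hx0
    constructor
    · simp [EMBr]; nlinarith
    · intro _; simp [EMBr]; nlinarith
  · have hdiv : (0:ℝ) < c / x := div_pos hc hx'
    have h := Real.log_le_sub_one_of_pos hdiv
    rw [Real.log_div hc.ne' hx'.ne'] at h
    have h2 : x * (Real.log c - Real.log x) ≤ x * (c / x - 1) :=
      mul_le_mul_of_nonneg_left h hx'.le
    have h3 : x * (c / x - 1) = c - x := by field_simp
    constructor
    · simp only [EMBr]; nlinarith
    · intro hne
      have hne' : c / x ≠ 1 := by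
        intro hh; apply hne; field_simp at hh; linarith
      have hs := Real.log_lt_sub_one_of_pos hdiv hne'
      rw [Real.log_div hc.ne' hx'.ne'] at hs
      have h2' : x * (Real.log c - Real.log x) < x * (c / x - 1) :=
        mul_lt_mul_of_pos_left hs hx'
      simp only [EMBr]; nlinarith

theorem stmt2 (n : ℕ) (hn : 2 ≤ n) (p σ : Fin n → ℝ) (hp : ∀ k, 1 ≤ p k)
    (hneq : ∃ i j, σ i ≠ σ j)
    (η : ℝ) (hη : IsLeast (Set.range σ) η ∨ IsGreatest (Set.range σ) η)
    (u v : ℝ) (hu : 0 < u) (hv : v = η * u) :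
    {k : Fin n | σ k = η}.Nonempty ∧
    IsOptMBFin p σ u v (wExtreme p σ η u) ∧
    (∀ w, IsOptMBFin p σ u v w → w = wExtreme p σ η u) := by
  have hpk : ∀ k, 0 < p k := fun k => lt_of_lt_of_le one_pos (hp k)
  have hηrange : η ∈ Set.range σ := by rcases hη with h | h <;> exact h.1
  obtain ⟨k0, hk0⟩ := hηrange
  have hne : ({k : Fin n | σ k = η}).Nonempty := ⟨k0, hk0⟩
  set S : Finset (Fin n) := Finset.univ.filter (fun l => σ l = η) with hSdef
  have hk0S : k0 ∈ S := by simp [hSdef, hk0]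
  set P : ℝ := ∑ l ∈ S, p l with hPdef
  have hP : 0 < P := Finset.sum_pos (fun l _ => hpk l) ⟨k0, hk0S⟩
  set c : ℝ := u / P with hcdef
  have hc : 0 < c := div_pos hu hP
  set wE := wExtreme p σ η u with hwEdef
  have hwEval : ∀ k, σ k = η → wE k = c * p k := by
    intro k hk
    simp only [hwEdef, wExtreme, if_pos hk, ← hSdef, ← hPdef, hcdef]
    ring
  have hwEval0 : ∀ k, σ k ≠ η → wE k = 0 := by
    intro k hk
    simp only [hwEdef, wExtreme, if_neg hk]
  -- feasibility of wE
  have hsum_wE : ∑ k, wE k = u := by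
    have : ∑ k, wE k = ∑ k ∈ S, c * p k := by
      rw [hSdef, Finset.sum_filter]
      apply Finset.sum_congr rfl
      intro k _
      by_cases hk : σ k = η
      · rw [if_pos hk, hwEval k hk]
      · rw [if_neg hk, hwEval0 k hk]
    rw [this, ← Finset.mul_sum, ← hPdef, hcdef]
    field_simp
  have hsumσ_wE : ∑ k, σ k * wE k = v := by
    have h1 : ∑ k, σ k * wE k = ∑ k, η * wE k := by
      apply Finset.sum_congr rfl
      intro k _
      by_cases hk : σ k = η
      · rw [hk]
      · rw [hwEval0 k hk]; ring
    rw [h1, ← Finset.mul_sum, hsum_wE, hv]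
  have hwEnn : ∀ k, 0 ≤ wE k := by
    intro k
    by_cases hk : σ k = η
    · rw [hwEval k hk]; exact mul_nonneg hc.le (hpk k).le
    · rw [hwEval0 k hk]
  have hwEfeas : FeasFin σ u v wE := ⟨hwEnn, hsum_wE, hsumσ_wE⟩
  -- zero off support
  have hzero : ∀ w, FeasFin σ u v w → ∀ k, σ k ≠ η → w k = 0 := by
    intro w ⟨hw0, hw1, hw2⟩ k hk
    rcases hη with hle | hge
    · have hsum0 : ∑ j, (σ j - η) * w j = 0 := by
        have : ∑ j, (σ j - η) * w j = (∑ j, σ j * w j) - η * ∑ j, w j := by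
          rw [Finset.mul_sum, ← Finset.sum_sub_distrib]
          apply Finset.sum_congr rfl; intro j _; ring
        rw [this, hw1, hw2, hv]; ring
      have hnn : ∀ j ∈ Finset.univ, 0 ≤ (σ j - η) * w j := by
        intro j _
        have := hle.2 ⟨j, rfl⟩
        have := hw0 j
        nlinarith
      have := (Finset.sum_eq_zero_iff_of_nonneg hnn).mp hsum0 k (Finset.mem_univ k)
      have hσk : σ k - η ≠ 0 := by
        intro hh; apply hk; linarith [sub_eq_zero.mp hh]
      exact (mul_eq_zero.mp this).resolve_left hσk
    · have hsum0 : ∑ j, (η - σ j) * w j = 0 := by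
        have : ∑ j, (η - σ j) * w j = η * (∑ j, w j) - ∑ j, σ j * w j := by
          rw [Finset.mul_sum, ← Finset.sum_sub_distrib]
          apply Finset.sum_congr rfl; intro j _; ring
        rw [this, hw1, hw2, hv]; ring
      have hnn : ∀ j ∈ Finset.univ, 0 ≤ (η - σ j) * w j := by
        intro j _
        have := hge.2 ⟨j, rfl⟩
        have := hw0 j
        nlinarith
      have := (Finset.sum_eq_zero_iff_of_nonneg hnn).mp hsum0 k (Finset.mem_univ k)
      have hσk : η - σ k ≠ 0 := by
        intro hh; apply hk; linarith [sub_eq_zero.mp hh]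
      exact (mul_eq_zero.mp this).resolve_left hσk
  -- termwise inequality
  have hterm : ∀ w, FeasFin σ u v w → ∀ k,
      Real.log c * (w k - wE k) + p k * EMBr (wE k / p k) ≤ p k * EMBr (w k / p k) ∧
      (w k ≠ wE k → Real.log c * (w k - wE k) + p k * EMBr (wE k / p k) < p k * EMBr (w k / p k)) := by
    intro w hw k
    by_cases hk : σ k = η
    · have hwEk : wE k = c * p k := hwEval k hk
      have hwEkp : wE k / p k = c := by rw [hwEk]; exact mul_div_cancel_right₀ c (hpk k).ne'
      set x : ℝ := w k / p k with hxdef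
      have hx0 : 0 ≤ x := div_nonneg (hw.1 k) (hpk k).le
      have hwk : w k = x * p k := (div_mul_cancel₀ (w k) (hpk k).ne').symm
      obtain ⟨hA, hB⟩ := embr_key x c hx0 hc
      constructor
      · rw [hwEkp, hwEk, hwk]
        nlinarith [mul_le_mul_of_nonneg_left hA (hpk k).le]
      · intro hne
        have hxc : x ≠ c := by
          intro hh; apply hne; rw [hwk, hh, hwEk]
        rw [hwEkp, hwEk, hwk]
        nlinarith [mul_lt_mul_of_pos_left (hB hxc) (hpk k)]
    · have h1 : w k = 0 := hzero w hw k hk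
      have h2 : wE k = 0 := hwEval0 k hk
      constructor
      · rw [h1, h2]; simp only [sub_self, mul_zero, zero_add, le_refl]
      · intro hne; exact absurd (h1.trans h2.symm) hne
  -- sum of linear terms vanishes
  have hlin : ∀ w, FeasFin σ u v w →
      ∑ k, (Real.log c * (w k - wE k) + p k * EMBr (wE k / p k)) = objMBFin p wE := by
    intro w hw
    rw [Finset.sum_add_distrib, ← Finset.mul_sum, Finset.sum_sub_distrib, hw.2.1, hsum_wE]
    simp [objMBFin]
  have hmain : ∀ w, FeasFin σ u v w → objMBFin p wE ≤ objMBFin p w ∧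
      (w ≠ wE → objMBFin p wE < objMBFin p w) := by
    intro w hw
    constructor
    · calc objMBFin p wE = ∑ k, (Real.log c * (w k - wE k) + p k * EMBr (wE k / p k)) :=
            (hlin w hw).symm
        _ ≤ ∑ k, p k * EMBr (w k / p k) :=
            Finset.sum_le_sum (fun k _ => (hterm w hw k).1)
        _ = objMBFin p w := rfl
    · intro hne
      obtain ⟨k1, hk1⟩ : ∃ k, w k ≠ wE k := by
        by_contra hh
        push_neg at hh
        exact hne (funext hh)
      calc objMBFin p wE = ∑ k, (Real.log c * (w k - wE k) + p k * EMBr (wE k / p k)) :=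
            (hlin w hw).symm
        _ < ∑ k, p k * EMBr (w k / p k) :=
            Finset.sum_lt_sum (fun k _ => (hterm w hw k).1)
              ⟨k1, Finset.mem_univ k1, (hterm w hw k1).2 hk1⟩
        _ = objMBFin p w := rfl
  refine ⟨hne, ⟨hwEfeas, fun w' hw' => (hmain w' hw').1⟩, ?_⟩
  intro w ⟨hwf, hwopt⟩
  by_contra hne'
  have h1 := (hmain w hwf).2 hne'
  have h2 := hwopt wE hwEfeas
  linarith
end

section
/- Fix an integer n ≥ 2, reals p_1,…,p_n with p_k ≥ 1, and reals σ_1,…,σ_n. Let (u,v) ∈ ℝ₊ × ℝ be such that there exists a tuple (u_1,…,u_n) with 0 ≤ u_k ≤ p_k for all k, Σ_{k=1}^n u_k = u and Σ_{k=1}^n σ_k u_k = v. Then the problem of minimizing Σ_{k=1}^n p_k · E_FD(u_k/p_k) over tuples (u_1,…,u_n) of nonnegative reals satisfying Σ_{k=1}^n u_k = u and Σ_{k=1}^n σ_k u_k = v has a unique optimal solution (ū_1,…,ū_n). Moreover, if there exists a feasible tuple with 0 < u_k < p_k for all k, then 0 < ū_k < p_k for all k and there exist reals a, b such that ln(ū_k/(p_k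 − ū_k)) = a + b·σ_k for every k; if in addition min_k σ_k < max_k σ_k, then a and b are unique. -/
/-- The Fermi–Dirac entropy `E_FD : ℝ → ℝ ∪ {+∞}`:
`E_FD(u) = u ln u + (1−u) ln(1−u)` on `[0,1]` (with `0 · ln 0 := 0`, which holds since
`Real.log 0 = 0`) and `+∞` outside `[0,1]`. -/
noncomputable def EFDe (u : ℝ) : EReal :=
  if 0 ≤ u ∧ u ≤ 1 then ((u * Real.log u + (1 - u) * Real.log (1 - u) : ℝ) : EReal) else ⊤

/-- The Fermi–Dirac objective `Σ p_k E_FD(u_k/p_k)`, with values in `ℝ ∪ {+∞}`. -/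
noncomputable def objFDFin {n : ℕ} (p : Fin n → ℝ) (w : Fin n → ℝ) : EReal :=
  ∑ k, (p k : EReal) * EFDe (w k / p k)

/-- `w` is an optimal solution of the finite Fermi–Dirac entropy minimization problem. -/
def IsOptFDFin {n : ℕ} (p σ : Fin n → ℝ) (u v : ℝ) (w : Fin n → ℝ) : Prop :=
  FeasFin σ u v w ∧ ∀ w', FeasFin σ u v w' → objFDFin p w ≤ objFDFin p w'

/-!
The objective is a sum of continuous, strictly convex functions of the single coordinates, and it
is finite exactly on the compact convex set of feasible tuples with `u_k ≤ p_k`; hence a minimizer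
exists and is unique. The Fermi–Dirac entropy has slope `-∞` at `0` and `+∞` at `1`, so moving a
boundary minimizer a little towards a feasible interior point would lower the objective: the
minimizer is interior. There the objective is differentiable, and its gradient
`ln (ū_k / (p_k - ū_k))` vanishes on the common kernel of `(1, …, 1)` and `σ`, so it is a
combination `a + b σ_k`; two distinct values of `σ` determine `a` and `b`.
-/

open Real Set

lemma StrictConvexOn.const_mul_comp_div {s : Set ℝ} {f : ℝ → ℝ} (hf : StrictConvexOn ℝ s f)
    {c : ℝ} (hc : 0 < c) : StrictConvexOn ℝ ((· / c) ⁻¹' s) fun x => c * f (x / c) := by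
  have hcomb : ∀ a b x y : ℝ, (a • x + b • y) / c = a • (x / c) + b • (y / c) := fun a b x y => by
    simp only [smul_eq_mul]; ring
  refine ⟨fun x hx y hy a b ha hb hab => ?_, fun x hx y hy hxy a b ha hb hab => ?_⟩
  · simpa only [mem_preimage, hcomb] using hf.1 hx hy ha hb hab
  · have := mul_lt_mul_of_pos_left (hf.2 hx hy (by simpa [hc.ne'] using hxy) ha hb hab) hc
    show c * f ((a • x + b • y) / c) < a • (c * f (x / c)) + b • (c * f (y / c))
    rw [hcomb]
    simp only [smul_eq_mul] at this ⊢
    linarith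

lemma strictConvexOn_sum_apply {ι : Type*} [Fintype ι] {s : ι → Set ℝ} {f : ι → ℝ → ℝ}
    (hf : ∀ i, StrictConvexOn ℝ (s i) (f i)) :
    StrictConvexOn ℝ (univ.pi s) fun w => ∑ i, f i (w i) := by
  refine ⟨convex_pi fun i _ => (hf i).1, fun x hx y hy hxy a b ha hb hab => ?_⟩
  obtain ⟨j, hj⟩ := Function.ne_iff.1 hxy
  simp only [Pi.add_apply, Pi.smul_apply, smul_eq_mul, Finset.mul_sum, ← Finset.sum_add_distrib]
  refine Finset.sum_lt_sum (fun i _ => ?_) ⟨j, Finset.mem_univ j, ?_⟩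
  · exact (hf i).convexOn.2 (hx i trivial) (hy i trivial) ha.le hb.le hab
  · exact (hf j).2 (hx j trivial) (hy j trivial) hj ha hb hab

lemma exists_mem_Ioc_mul_log_add_neg {P : ℝ} (hP : 0 < P) (A : ℝ) :
    ∃ t ∈ Ioc (0 : ℝ) 1, P * log t + A < 0 := by
  have hneg : -(|A| + 1) / P ≤ 0 :=
    div_nonpos_of_nonpos_of_nonneg (by linarith [abs_nonneg A]) hP.le
  refine ⟨exp (-(|A| + 1) / P), ⟨exp_pos _, exp_le_one_iff.2 hneg⟩, ?_⟩
  rw [log_exp, mul_div_cancel₀ _ hP.ne']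
  linarith [le_abs_self A]

lemma exists_eq_add_mul_of_sum_mul_eq_zero {ι : Type*} [Fintype ι] (σ g : ι → ℝ)
    (h : ∀ x : ι → ℝ, ∑ i, x i = 0 → ∑ i, σ i * x i = 0 → ∑ i, g i * x i = 0) :
    ∃ a b : ℝ, ∀ i, g i = a + b * σ i := by
  classical
  let L : Fin 2 → (ι → ℝ) →ₗ[ℝ] ℝ :=
    ![Fintype.linearCombination ℝ 1, Fintype.linearCombination ℝ σ]
  have hker : ⨅ j, LinearMap.ker (L j) ≤ LinearMap.ker (Fintype.linearCombination ℝ g) := by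
    intro x hx
    simp only [Submodule.mem_iInf, LinearMap.mem_ker, Fin.forall_fin_two, L,
      Matrix.cons_val_zero, Matrix.cons_val_one, Fintype.linearCombination_apply, smul_eq_mul,
      Pi.one_apply, mul_one] at hx ⊢
    simp_rw [mul_comm (x _)] at hx ⊢
    exact h x hx.1 hx.2
  obtain ⟨c, hc⟩ :=
    (Submodule.mem_span_range_iff_exists_fun ℝ).1 (mem_span_of_iInf_ker_le_ker hker)
  refine ⟨c 0, c 1, fun i => ?_⟩
  have := LinearMap.congr_fun hc (Pi.single i 1)
  simpa [Fin.sum_univ_two, L, Fintype.linearCombination_apply_single] using this.symm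

lemma eq_of_add_mul_eq_add_mul {a b a' b' x y : ℝ} (hxy : x ≠ y)
    (hx : a + b * x = a' + b' * x) (hy : a + b * y = a' + b' * y) : a = a' ∧ b = b' := by
  have hb : b = b' := by
    have : (b - b') * (x - y) = 0 := by linarith
    simpa [sub_eq_zero, hxy] using this
  subst hb
  exact ⟨by linarith, rfl⟩

noncomputable def fdEntropy (x : ℝ) : ℝ := x * log x + (1 - x) * log (1 - x)

lemma continuous_fdEntropy : Continuous fdEntropy :=
  continuous_mul_log.add (continuous_mul_log.comp (continuous_const.sub continuous_id))

lemma strictConvexOn_fdEntropy : StrictConvexOn ℝ (Icc 0 1) fdEntropy := by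
  have hreflect : ConvexOn ℝ (Icc 0 1) fun x : ℝ => (1 - x) * log (1 - x) := by
    refine ((convexOn_mul_log.comp_affineMap (AffineMap.lineMap (1 : ℝ) 0)).subset
      (fun x hx => ?_) (convex_Icc 0 1)).congr fun x _ => ?_
    · simpa [AffineMap.lineMap_apply] using hx.2
    · simp [AffineMap.lineMap_apply, neg_add_eq_sub]
  exact (strictConvexOn_mul_log.subset Icc_subset_Ici_self (convex_Icc 0 1)).add_convexOn hreflect

lemma hasDerivAt_fdEntropy {x : ℝ} (h0 : 0 < x) (h1 : x < 1) :
    HasDerivAt fdEntropy (log (x / (1 - x))) x := by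
  have h := (hasDerivAt_mul_log h0.ne').fun_add
    ((hasDerivAt_mul_log (sub_pos.2 h1).ne').comp x ((hasDerivAt_id x).const_sub 1))
  rw [log_div h0.ne' (sub_pos.2 h1).ne']
  exact h.congr_deriv (by ring)

lemma fdEntropy_le_mul_log {x : ℝ} (h0 : 0 ≤ x) (h1 : x ≤ 1) : fdEntropy x ≤ x * log x := by
  have : (1 - x) * log (1 - x) ≤ 0 :=
    mul_nonpos_of_nonneg_of_nonpos (by linarith) (log_nonpos (by linarith) (by linarith))
  unfold fdEntropy; linarith

lemma fdEntropy_one_sub (x : ℝ) : fdEntropy (1 - x) = fdEntropy x := by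
  simp only [fdEntropy, sub_sub_cancel]; ring

noncomputable def fdTerm (p x : ℝ) : ℝ := p * fdEntropy (x / p)

lemma fdTerm_zero (p : ℝ) : fdTerm p 0 = 0 := by simp [fdTerm, fdEntropy]

lemma fdTerm_sub_left {p : ℝ} (hp : p ≠ 0) (x : ℝ) : fdTerm p (p - x) = fdTerm p x := by
  rw [fdTerm, sub_div, div_self hp, fdEntropy_one_sub, fdTerm]

lemma strictConvexOn_fdTerm {p : ℝ} (hp : 0 < p) : StrictConvexOn ℝ (Icc 0 p) (fdTerm p) := by
  have hIcc : (· / p) ⁻¹' Icc 0 1 = Icc 0 p := by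
    ext x; simp [div_le_one hp, div_nonneg_iff, hp.le, hp.not_ge]
  rw [← hIcc]
  exact strictConvexOn_fdEntropy.const_mul_comp_div hp

lemma hasDerivAt_fdTerm {p x : ℝ} (h0 : 0 < x) (h1 : x < p) :
    HasDerivAt (fdTerm p) (log (x / (p - x))) x := by
  have hp : 0 < p := h0.trans h1
  have h := ((hasDerivAt_fdEntropy (div_pos h0 hp) ((div_lt_one hp).2 h1)).comp x
    ((hasDerivAt_id x).div_const p)).const_mul p
  refine h.congr_deriv ?_
  have : x / p / (1 - x / p) = x / (p - x) := by field_simp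
  rw [this]; field_simp

lemma fdTerm_mul_le {p y t : ℝ} (hy : 0 < y) (hyp : y ≤ p) (ht0 : 0 < t) (ht1 : t ≤ 1) :
    fdTerm p (t * y) ≤ t * (y * log t + y * log (y / p)) := by
  have hp : 0 < p := hy.trans_le hyp
  have hty : t * y / p ≤ 1 := (div_le_one hp).2 (by nlinarith)
  calc fdTerm p (t * y) ≤ p * (t * y / p * log (t * y / p)) :=
        mul_le_mul_of_nonneg_left (fdEntropy_le_mul_log (by positivity) hty) hp.le
    _ = t * (y * log t + y * log (y / p)) := by
        rw [mul_div_assoc, log_mul ht0.ne' (div_pos hy hp).ne']; field_simp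

/-- At an endpoint of `[0, p]` the entropy term has slope `-∞` towards the interior. -/
lemma fdTerm_segment_sub_le_of_endpoint {p x y : ℝ} (hx : x = 0 ∨ x = p) (hy : y ∈ Ioo 0 p) :
    ∃ P > 0, ∃ B, ∀ t ∈ Ioc (0 : ℝ) 1,
      fdTerm p (x + t * (y - x)) - fdTerm p x ≤ t * (P * log t + B) := by
  have hp : 0 < p := hy.1.trans hy.2
  rcases hx with rfl | hxp
  · refine ⟨y, hy.1, y * log (y / p), fun t ht => ?_⟩
    simpa [fdTerm_zero] using fdTerm_mul_le hy.1 hy.2.le ht.1 ht.2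
  · rw [hxp]
    refine ⟨p - y, sub_pos.2 hy.2, (p - y) * log ((p - y) / p), fun t ht => ?_⟩
    have h := fdTerm_mul_le (sub_pos.2 hy.2) (sub_le_self p hy.1.le) ht.1 ht.2
    rw [← fdTerm_sub_left hp.ne', show p - t * (p - y) = p + t * (y - p) by ring] at h
    have hp_end : fdTerm p p = 0 := by simpa [fdTerm_zero] using fdTerm_sub_left hp.ne' 0
    rw [hp_end, sub_zero]
    exact h

lemma coe_mul_EFDe_div_of_mem_Icc {p x : ℝ} (hp : 0 < p) (hx : x ∈ Icc 0 p) :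
    (p : EReal) * EFDe (x / p) = fdTerm p x := by
  have h : 0 ≤ x / p ∧ x / p ≤ 1 := ⟨div_nonneg hx.1 hp.le, (div_le_one hp).2 hx.2⟩
  rw [EFDe, if_pos h, ← EReal.coe_mul]
  rfl

lemma coe_mul_EFDe_div_of_lt {p x : ℝ} (hp : 0 < p) (hx : p < x) :
    (p : EReal) * EFDe (x / p) = ⊤ := by
  rw [EFDe, if_neg fun h => ((one_lt_div hp).2 hx).not_ge h.2,
    EReal.mul_top_of_pos (EReal.coe_pos.2 hp)]

lemma coe_mul_EFDe_ne_bot {p : ℝ} (hp : 0 < p) (x : ℝ) : (p : EReal) * EFDe x ≠ ⊥ := by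
  unfold EFDe
  split_ifs
  · exact EReal.coe_mul _ _ ▸ EReal.coe_ne_bot _
  · rw [EReal.mul_top_of_pos (EReal.coe_pos.2 hp)]; simp

lemma FeasFin.add_smul {n : ℕ} {σ w h : Fin n → ℝ} {u v t : ℝ} (hw : FeasFin σ u v w)
    (hsum : ∑ k, h k = 0) (hσ : ∑ k, σ k * h k = 0) (hnonneg : ∀ k, 0 ≤ w k + t * h k) :
    FeasFin σ u v (w + t • h) := by
  refine ⟨hnonneg, ?_, ?_⟩
  · simp only [Pi.add_apply, Pi.smul_apply, smul_eq_mul, Finset.sum_add_distrib,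
      ← Finset.mul_sum, hsum, hw.2.1, mul_zero, add_zero]
  · simp only [Pi.add_apply, Pi.smul_apply, smul_eq_mul, mul_add, Finset.sum_add_distrib,
      mul_left_comm _ t, ← Finset.mul_sum, hσ, hw.2.2, mul_zero, add_zero]

section FermiDiracProblem

variable {n : ℕ} (p σ : Fin n → ℝ) (u v : ℝ)

noncomputable def fdObjective (w : Fin n → ℝ) : ℝ := ∑ k, fdTerm (p k) (w k)

def fdFeasibleSet : Set (Fin n → ℝ) := {w | FeasFin σ u v w ∧ ∀ k, w k ≤ p k}

variable {p σ u v}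

lemma fdFeasibleSet_subset_pi : fdFeasibleSet p σ u v ⊆ univ.pi fun k => Icc 0 (p k) :=
  fun _ hw k _ => ⟨hw.1.1 k, hw.2 k⟩

variable (p σ u v)

lemma continuous_fdObjective : Continuous (fdObjective p) :=
  continuous_finsetSum _ fun k _ =>
    continuous_const.mul (continuous_fdEntropy.comp ((continuous_apply k).div_const _))

lemma isCompact_fdFeasibleSet : IsCompact (fdFeasibleSet p σ u v) := by
  refine (isCompact_univ_pi fun k => isCompact_Icc).of_isClosed_subset ?_ fdFeasibleSet_subset_pi
  simp only [fdFeasibleSet, FeasFin, ofPred_and, ofPred_forall]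
  exact ((isClosed_iInter fun k => isClosed_le continuous_const (continuous_apply k)).inter
    ((isClosed_eq (by fun_prop) continuous_const).inter
      (isClosed_eq (by fun_prop) continuous_const))).inter
    (isClosed_iInter fun k => isClosed_le (continuous_apply k) continuous_const)

lemma convex_fdFeasibleSet : Convex ℝ (fdFeasibleSet p σ u v) := by
  intro x hx y hy a b ha hb hab
  obtain rfl : a = 1 - b := by linarith
  have hcomb : (1 - b) • x + b • y = x + b • (y - x) := by module
  have hsum : ∑ k, (y - x) k = 0 := by simp [Finset.sum_sub_distrib, hx.1.2.1, hy.1.2.1]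
  have hσ : ∑ k, σ k * (y - x) k = 0 := by
    simp [mul_sub, Finset.sum_sub_distrib, hx.1.2.2, hy.1.2.2]
  have hk : ∀ k, x k + b * (y - x) k = (1 - b) * x k + b * y k := fun k => by
    simp only [Pi.sub_apply]; ring
  rw [hcomb]
  refine ⟨hx.1.add_smul hsum hσ fun k => ?_, fun k => ?_⟩
  · rw [hk]; nlinarith [hx.1.1 k, hy.1.1 k]
  · simp only [Pi.add_apply, Pi.smul_apply, smul_eq_mul, hk]
    nlinarith [mul_le_mul_of_nonneg_left (hx.2 k) ha, mul_le_mul_of_nonneg_left (hy.2 k) hb]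

variable {p σ u v}

variable (σ u v) in
lemma strictConvexOn_fdObjective (hp : ∀ k, 0 < p k) :
    StrictConvexOn ℝ (fdFeasibleSet p σ u v) (fdObjective p) :=
  (strictConvexOn_sum_apply fun k => strictConvexOn_fdTerm (hp k)).subset
    fdFeasibleSet_subset_pi (convex_fdFeasibleSet p σ u v)

lemma objFDFin_eq_coe (hp : ∀ k, 0 < p k) {w : Fin n → ℝ}
    (hw : w ∈ univ.pi fun k => Icc 0 (p k)) : objFDFin p w = fdObjective p w := by
  refine (Finset.sum_congr rfl fun k _ =>
    coe_mul_EFDe_div_of_mem_Icc (hp k) (hw k trivial)).trans ?_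
  exact (map_sum (⟨⟨Real.toEReal, EReal.coe_zero⟩, EReal.coe_add⟩ : ℝ →+ EReal) _ _).symm

lemma objFDFin_eq_top (hp : ∀ k, 0 < p k) {w : Fin n → ℝ} {k : Fin n} (hk : p k < w k) :
    objFDFin p w = ⊤ := by
  classical
  rw [objFDFin, ← Finset.add_sum_erase _ _ (Finset.mem_univ k), coe_mul_EFDe_div_of_lt (hp k) hk,
    EReal.top_add_iff_ne_bot]
  exact Finset.sum_induction _ (· ≠ ⊥) (fun _ _ ha hb => EReal.add_ne_bot_iff.2 ⟨ha, hb⟩)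
    EReal.zero_ne_bot fun j _ => coe_mul_EFDe_ne_bot (hp j) _

lemma isOptFDFin_iff (hp : ∀ k, 0 < p k) {w₀ : Fin n → ℝ} (hw₀ : w₀ ∈ fdFeasibleSet p σ u v)
    {w : Fin n → ℝ} :
    IsOptFDFin p σ u v w ↔
      w ∈ fdFeasibleSet p σ u v ∧ IsMinOn (fdObjective p) (fdFeasibleSet p σ u v) w := by
  have hcoe : ∀ w ∈ fdFeasibleSet p σ u v, objFDFin p w = fdObjective p w := fun w hw =>
    objFDFin_eq_coe hp (fdFeasibleSet_subset_pi hw)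
  have hfeas : ∀ w, FeasFin σ u v w → w ∉ fdFeasibleSet p σ u v → objFDFin p w = ⊤ := by
    intro w hw hwS
    obtain ⟨k, hk⟩ : ∃ k, p k < w k := by simpa [fdFeasibleSet, hw] using hwS
    exact objFDFin_eq_top hp hk
  constructor
  · rintro ⟨hw, hmin⟩
    have hwS : w ∈ fdFeasibleSet p σ u v := by
      by_contra hwS
      have := hmin w₀ hw₀.1
      rw [hfeas w hw hwS, hcoe w₀ hw₀, top_le_iff] at this
      exact EReal.coe_ne_top _ this
    refine ⟨hwS, fun w' hw' => ?_⟩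
    have := hmin w' hw'.1
    rwa [hcoe w hwS, hcoe w' hw', EReal.coe_le_coe_iff] at this
  · rintro ⟨hwS, hmin⟩
    refine ⟨hwS.1, fun w' hw' => ?_⟩
    by_cases hw'S : w' ∈ fdFeasibleSet p σ u v
    · rw [hcoe w hwS, hcoe w' hw'S, EReal.coe_le_coe_iff]
      exact hmin hw'S
    · rw [hfeas w' hw' hw'S]; exact le_top

lemma fdObjective_segment_sub_le (hp : ∀ k, 0 < p k) {w w' : Fin n → ℝ}
    (hw : w ∈ univ.pi fun k => Icc 0 (p k)) (hw' : w' ∈ univ.pi fun k => Icc 0 (p k))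
    {t : ℝ} (ht : t ∈ Icc (0 : ℝ) 1) (k₀ : Fin n) :
    fdObjective p (w + t • (w' - w)) - fdObjective p w ≤
      (fdTerm (p k₀) (w k₀ + t * (w' k₀ - w k₀)) - fdTerm (p k₀) (w k₀)) +
        t * ∑ k ∈ Finset.univ.erase k₀, (fdTerm (p k) (w' k) - fdTerm (p k) (w k)) := by
  have hconv : ∀ k, fdTerm (p k) (w k + t * (w' k - w k)) - fdTerm (p k) (w k) ≤
      t * (fdTerm (p k) (w' k) - fdTerm (p k) (w k)) := fun k => by
    have := (strictConvexOn_fdTerm (hp k)).convexOn.2 (hw k trivial) (hw' k trivial)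
      (sub_nonneg.2 ht.2) ht.1 (sub_add_cancel 1 t)
    simp only [smul_eq_mul] at this
    rw [show w k + t * (w' k - w k) = (1 - t) * w k + t * w' k by ring]
    linarith
  simp only [fdObjective, ← Finset.sum_sub_distrib, Pi.add_apply, Pi.smul_apply, Pi.sub_apply,
    smul_eq_mul, Finset.mul_sum]
  rw [← Finset.add_sum_erase _ _ (Finset.mem_univ k₀)]
  gcongr with k
  exact hconv k

variable (σ u v) in
lemma fdObjective_minimizer_mem_Ioo (hp : ∀ k, 0 < p k) {w w' : Fin n → ℝ}
    (hw : w ∈ fdFeasibleSet p σ u v) (hmin : IsMinOn (fdObjective p) (fdFeasibleSet p σ u v) w)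
    (hw' : w' ∈ fdFeasibleSet p σ u v) (hw'_int : ∀ k, w' k ∈ Ioo 0 (p k)) :
    ∀ k, w k ∈ Ioo 0 (p k) := by
  intro k₀
  by_contra hk₀
  have hend : w k₀ = 0 ∨ w k₀ = p k₀ := by
    rcases (hw.1.1 k₀).eq_or_lt with h | h
    · exact Or.inl h.symm
    · exact Or.inr ((hw.2 k₀).eq_of_not_lt fun h' => hk₀ ⟨h, h'⟩)
  obtain ⟨P, hP, B, hB⟩ := fdTerm_segment_sub_le_of_endpoint hend (hw'_int k₀)
  obtain ⟨t, ht, hneg⟩ := exists_mem_Ioc_mul_log_add_neg hP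
    (B + ∑ k ∈ Finset.univ.erase k₀, (fdTerm (p k) (w' k) - fdTerm (p k) (w k)))
  have hmem : w + t • (w' - w) ∈ fdFeasibleSet p σ u v := by
    have := convex_fdFeasibleSet p σ u v hw hw' (sub_nonneg.2 ht.2) ht.1.le (sub_add_cancel 1 t)
    rwa [show (1 - t) • w + t • w' = w + t • (w' - w) by module] at this
  have hle := fdObjective_segment_sub_le hp (fdFeasibleSet_subset_pi hw)
    (fdFeasibleSet_subset_pi hw') (Ioc_subset_Icc_self ht) k₀
  have hk₀_le := hB t ht
  have hwle : fdObjective p w ≤ fdObjective p (w + t • (w' - w)) := hmin hmem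
  nlinarith [mul_neg_of_pos_of_neg ht.1 hneg]

variable (σ u v) in
lemma fdObjective_stationary {w : Fin n → ℝ}
    (hw : w ∈ fdFeasibleSet p σ u v) (hmin : IsMinOn (fdObjective p) (fdFeasibleSet p σ u v) w)
    (hw_int : ∀ k, w k ∈ Ioo 0 (p k)) {h : Fin n → ℝ}
    (hsum : ∑ k, h k = 0) (hσ : ∑ k, σ k * h k = 0) :
    ∑ k, log (w k / (p k - w k)) * h k = 0 := by
  have hline : ∀ k, HasDerivAt (fun t : ℝ => w k + t * h k) (h k) 0 := fun k => by
    simpa using ((hasDerivAt_id (0 : ℝ)).mul_const (h k)).const_add (w k)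
  have hderiv : HasDerivAt (fun t : ℝ => fdObjective p (w + t • h))
      (∑ k, log (w k / (p k - w k)) * h k) 0 := by
    refine HasDerivAt.fun_sum fun k _ => ?_
    have hd := hasDerivAt_fdTerm (p := p k) (hw_int k).1 (hw_int k).2
    simp only [Pi.add_apply, Pi.smul_apply, smul_eq_mul]
    exact hd.comp_of_eq 0 (hline k) (by simp)
  have hnear : ∀ᶠ t in nhds (0 : ℝ), ∀ k, w k + t * h k ∈ Ioo 0 (p k) :=
    Filter.eventually_all.2 fun k => (hline k).continuousAt.eventually_mem
      (isOpen_Ioo.mem_nhds (by simpa using hw_int k))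
  refine IsLocalMin.hasDerivAt_eq_zero ?_ hderiv
  filter_upwards [hnear] with t ht
  simpa using hmin ⟨hw.1.add_smul hsum hσ fun k => (ht k).1.le, fun k => (ht k).2.le⟩

end FermiDiracProblem

theorem stmt3_general (n : ℕ) (p σ : Fin n → ℝ) (hp : ∀ k, 1 ≤ p k)
    (u v : ℝ)
    (hfeas : ∃ w : Fin n → ℝ, FeasFin σ u v w ∧ ∀ k, w k ≤ p k) :
    ∃ wbar : Fin n → ℝ, IsOptFDFin p σ u v wbar ∧
      (∀ w, IsOptFDFin p σ u v w → w = wbar) ∧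
      ((∃ w : Fin n → ℝ, FeasFin σ u v w ∧ ∀ k, 0 < w k ∧ w k < p k) →
        ((∀ k, 0 < wbar k ∧ wbar k < p k) ∧
          ∃ ab : ℝ × ℝ,
            (∀ k, Real.log (wbar k / (p k - wbar k)) = ab.1 + ab.2 * σ k) ∧
            ((∃ i j, σ i ≠ σ j) → ∀ ab' : ℝ × ℝ,
              (∀ k, Real.log (wbar k / (p k - wbar k)) = ab'.1 + ab'.2 * σ k) → ab' = ab))) := by
  have hp₀ : ∀ k, 0 < p k := fun k => one_pos.trans_le (hp k)
  obtain ⟨w₀, hw₀⟩ := hfeas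
  obtain ⟨wbar, hwbar, hmin⟩ := (isCompact_fdFeasibleSet p σ u v).exists_isMinOn ⟨w₀, hw₀⟩
    (continuous_fdObjective p).continuousOn
  refine ⟨wbar, (isOptFDFin_iff hp₀ hw₀).2 ⟨hwbar, hmin⟩, fun w hw => ?_, ?_⟩
  · obtain ⟨hwS, hwmin⟩ := (isOptFDFin_iff hp₀ hw₀).1 hw
    exact (strictConvexOn_fdObjective σ u v hp₀).eq_of_isMinOn hwmin hmin hwS hwbar
  rintro ⟨w', hw'F, hw'_int⟩
  have hint := fdObjective_minimizer_mem_Ioo σ u v hp₀ hwbar hmin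
    ⟨hw'F, fun k => (hw'_int k).2.le⟩ hw'_int
  obtain ⟨a, b, hab⟩ := exists_eq_add_mul_of_sum_mul_eq_zero σ _
    fun h hsum hσ => fdObjective_stationary σ u v hwbar hmin hint hsum hσ
  refine ⟨hint, (a, b), hab, ?_⟩
  rintro ⟨i, j, hij⟩ ⟨a', b'⟩ hab'
  obtain ⟨rfl, rfl⟩ := eq_of_add_mul_eq_add_mul hij ((hab i).symm.trans (hab' i))
    ((hab j).symm.trans (hab' j))
  rfl

theorem stmt3 (n : ℕ) (hn : 2 ≤ n) (p σ : Fin n → ℝ) (hp : ∀ k, 1 ≤ p k)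
    (u v : ℝ) (hu : 0 ≤ u)
    (hfeas : ∃ w : Fin n → ℝ, FeasFin σ u v w ∧ ∀ k, w k ≤ p k) :
    ∃ wbar : Fin n → ℝ, IsOptFDFin p σ u v wbar ∧
      (∀ w, IsOptFDFin p σ u v w → w = wbar) ∧
      ((∃ w : Fin n → ℝ, FeasFin σ u v w ∧ ∀ k, 0 < w k ∧ w k < p k) →
        ((∀ k, 0 < wbar k ∧ wbar k < p k) ∧
          ∃ ab : ℝ × ℝ,
            (∀ k, Real.log (wbar k / (p k - wbar k)) = ab.1 + ab.2 * σ k) ∧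
            ((∃ i j, σ i ≠ σ j) → ∀ ab' : ℝ × ℝ,
              (∀ k, Real.log (wbar k / (p k - wbar k)) = ab'.1 + ab'.2 * σ k) → ab' = ab))) :=
  stmt3_general n p σ hp u v hfeas
end

section
/- Let (p_n)_{n≥1} ⊆ [1,∞) and (σ_n)_{n≥1} ⊆ ℝ. For each W ∈ {E_BE, E_MB, E_FD}, the value function H_W : ℝ² → [−∞,+∞] is convex, in the sense that for all (u,v), (u',v') ∈ ℝ², all λ ∈ (0,1), and all reals μ > H_W(u,v) and μ' > H_W(u',v'), one has H_W(λ(u,v)+(1−λ)(u',v')) ≤ λμ + (1−λ)μ'. Moreover H_BE(u,v) ≤ H_MB(u,v) ≤ H_FD(u,v) for all (u,v) ∈ ℝ², and dom H_FD ⊆ dom H_MB = dom H_BE = dom S. -/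
open Filter

/-- The Bose–Einstein entropy, with values in `ℝ ∪ {+∞}`. -/
noncomputable def EBEe (u : ℝ) : EReal :=
  if 0 ≤ u then ((u * Real.log u - (1 + u) * Real.log (1 + u) : ℝ) : EReal) else ⊤

/-- The Maxwell–Boltzmann entropy, with values in `ℝ ∪ {+∞}`. -/
noncomputable def EMBe (u : ℝ) : EReal :=
  if 0 ≤ u then ((u * (Real.log u - 1) : ℝ) : EReal) else ⊤

/-- The sum of a series in `ℝ ∪ {±∞}`, following the paper's convention: the limit of the
partial sums when this limit exists in `[−∞,+∞]`, and `+∞` otherwise. -/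
noncomputable def serSum (β : ℕ → EReal) : EReal :=
  @dite _ (∃ l : EReal, Tendsto (fun N => ∑ k ∈ Finset.range N, β k) atTop (nhds l))
    (Classical.dec _) (fun h => h.choose) (fun _ => ⊤)

/-- `S(u,v)`: the set of sequences of nonnegative reals with `Σ u_n = u` and `Σ σ_n u_n = v`
(sums as limits of partial sums). -/
def Sfeas (σ : ℕ → ℝ) (u v : ℝ) : Set (ℕ → ℝ) :=
  {w | (∀ n, 0 ≤ w n) ∧
    Tendsto (fun N => ∑ k ∈ Finset.range N, w k) atTop (nhds u) ∧
    Tendsto (fun N => ∑ k ∈ Finset.range N, σ k * w k) atTop (nhds v)}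

/-- The value (marginal) function `H_W(u,v) = inf { Σ p_n W(u_n/p_n) : (u_n) ∈ S(u,v) }`,
with `inf ∅ = +∞`. -/
noncomputable def Hval (p σ : ℕ → ℝ) (W : ℝ → EReal) (u v : ℝ) : EReal :=
  sInf ((fun w => serSum fun n => (p n : EReal) * W (w n / p n)) '' Sfeas σ u v)

/-!
Each entropy is a convex real function `f` on an interval `D`, extended by `+∞` outside `D`.
If `(u_n)` and `(u'_n)` are feasible for `(u,v)` and `(u',v')`, then `λ u_n + (1-λ) u'_n` is
feasible for the convex combination, and convexity of `f` bounds its series termwise by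
`λ` times the first series plus `1-λ` times the second; comparison and linearity of the extended
series sum give convexity of `H_W`. The comparisons `H_BE ≤ H_MB ≤ H_FD` follow from the
pointwise inequalities `E_BE ≤ E_MB ≤ E_FD`, both instances of `t - 1 ≤ t log t`. For the
domains, a feasible sequence tends to `0`, so eventually `u_n / p_n ∈ [0,1]`, where `E_MB ≤ 0`:
the Maxwell–Boltzmann series then has eventually decreasing partial sums and cannot diverge
to `+∞`.
-/

open Set Topology

open Classical in
noncomputable def extendByTop (D : Set ℝ) (f : ℝ → ℝ) (x : ℝ) : EReal :=
  if x ∈ D then (f x : EReal) else ⊤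

lemma extendByTop_of_mem {D : Set ℝ} {f : ℝ → ℝ} {x : ℝ} (hx : x ∈ D) :
    extendByTop D f x = f x :=
  if_pos hx

lemma extendByTop_of_notMem {D : Set ℝ} {f : ℝ → ℝ} {x : ℝ} (hx : x ∉ D) :
    extendByTop D f x = ⊤ :=
  if_neg hx

section Entropy

open Real

noncomputable def entBE (x : ℝ) : ℝ := x * log x - (1 + x) * log (1 + x)

noncomputable def entMB (x : ℝ) : ℝ := x * (log x - 1)

noncomputable def entFD (x : ℝ) : ℝ := x * log x + (1 - x) * log (1 - x)

lemma EBEe_eq_extendByTop : EBEe = extendByTop (Ici 0) entBE := by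
  funext x
  by_cases hx : 0 ≤ x <;> simp [EBEe, extendByTop, entBE, hx]

lemma EMBe_eq_extendByTop : EMBe = extendByTop (Ici 0) entMB := by
  funext x
  by_cases hx : 0 ≤ x <;> simp [EMBe, extendByTop, entMB, hx]

lemma EFDe_eq_extendByTop : EFDe = extendByTop (Icc 0 1) entFD := by
  funext x
  by_cases hx : 0 ≤ x ∧ x ≤ 1 <;> simp [EFDe, extendByTop, entFD, hx]

lemma convexOn_entMB : ConvexOn ℝ (Ici 0) entMB := by
  have h : entMB = fun x => x * log x - x := by funext x; simp only [entMB]; ring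
  rw [h]
  exact convexOn_mul_log.sub (concaveOn_id (convex_Ici 0))

lemma convexOn_entFD : ConvexOn ℝ (Icc 0 1) entFD := by
  have hreflect : ConvexOn ℝ (Iic 1) fun x : ℝ => (1 - x) * log (1 - x) := by
    have h := convexOn_mul_log.comp_affineMap (AffineMap.const ℝ ℝ (1 : ℝ) - AffineMap.id ℝ ℝ)
    have hset : (AffineMap.const ℝ ℝ (1 : ℝ) - AffineMap.id ℝ ℝ) ⁻¹' Ici 0 = Iic 1 := by
      ext; simp
    rw [hset] at h
    exact h
  exact (convexOn_mul_log.subset Icc_subset_Ici_self (convex_Icc 0 1)).add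
    (hreflect.subset Icc_subset_Iic_self (convex_Icc 0 1))

lemma hasDerivAt_entBE {x : ℝ} (hx : 0 < x) :
    HasDerivAt entBE (log x - log (1 + x)) x := by
  have h : HasDerivAt (fun y => y * log y - (1 + y) * log (1 + y))
      (log x + 1 - (log (1 + x) + 1) * 1) x :=
    (hasDerivAt_mul_log hx.ne').sub ((hasDerivAt_mul_log (by positivity)).comp x
      ((hasDerivAt_id x).const_add 1))
  exact h.congr_deriv (by ring)

lemma convexOn_entBE : ConvexOn ℝ (Ici 0) entBE := by
  have hderiv : ∀ x ∈ Ioi (0 : ℝ), deriv entBE x = log x - log (1 + x) :=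
    fun x hx => (hasDerivAt_entBE hx).deriv
  refine MonotoneOn.convexOn_of_deriv (convex_Ici 0) ?_ ?_ ?_
  · exact continuous_mul_log.continuousOn.sub
      (continuous_mul_log.comp (continuous_const_add 1)).continuousOn
  · rw [interior_Ici]
    exact fun x hx => (hasDerivAt_entBE hx).differentiableAt.differentiableWithinAt
  · rw [interior_Ici]
    intro x hx y hy hxy
    have hx : 0 < x := hx
    have hy : 0 < y := hy
    rw [hderiv x hx, hderiv y hy, sub_le_sub_iff, ← log_mul hx.ne' (by positivity),
      ← log_mul hy.ne' (by positivity)]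
    exact log_le_log (by positivity) (by nlinarith)

lemma entBE_le_entMB {x : ℝ} (hx : 0 ≤ x) : entBE x ≤ entMB x := by
  have := self_sub_one_le_mul_log (by linarith : (0 : ℝ) ≤ 1 + x)
  simp only [entBE, entMB]
  nlinarith

lemma entMB_le_entFD {x : ℝ} (hx : x ∈ Icc (0 : ℝ) 1) : entMB x ≤ entFD x := by
  have := self_sub_one_le_mul_log (by linarith [hx.2] : (0 : ℝ) ≤ 1 - x)
  simp only [entMB, entFD]
  nlinarith

lemma entMB_nonpos {x : ℝ} (hx : x ∈ Icc (0 : ℝ) 1) : entMB x ≤ 0 :=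
  mul_nonpos_of_nonneg_of_nonpos hx.1 (by linarith [log_nonpos hx.1 hx.2])

end Entropy

lemma EReal.coe_finset_sum {ι : Type*} (s : Finset ι) (f : ι → ℝ) :
    ((∑ i ∈ s, f i : ℝ) : EReal) = ∑ i ∈ s, (f i : EReal) :=
  map_sum (⟨⟨(↑), EReal.coe_zero⟩, EReal.coe_add⟩ : ℝ →+ EReal) f s

lemma EReal.tendsto_add_of_ne_top {α : Type*} {l : Filter α} {f g : α → EReal} {x y : EReal}
    (hf : Tendsto f l (𝓝 x)) (hg : Tendsto g l (𝓝 y)) (hx : x ≠ ⊤) (hy : y ≠ ⊤) :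
    Tendsto (fun a => f a + g a) l (𝓝 (x + y)) :=
  (EReal.continuousAt_add (.inl hx) (.inr hy)).tendsto.comp (hf.prodMk_nhds hg)

section SerSum

open Finset

variable {β γ : ℕ → EReal} {a b : ℕ → ℝ}

lemma serSum_eq_of_tendsto {s : EReal}
    (h : Tendsto (fun N => ∑ k ∈ range N, β k) atTop (𝓝 s)) : serSum β = s := by
  have hex : ∃ s, Tendsto (fun N => ∑ k ∈ range N, β k) atTop (𝓝 s) := ⟨s, h⟩
  rw [serSum, dif_pos hex]
  exact tendsto_nhds_unique hex.choose_spec h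

lemma tendsto_serSum (h : serSum β ≠ ⊤) :
    Tendsto (fun N => ∑ k ∈ range N, β k) atTop (𝓝 (serSum β)) := by
  by_cases hex : ∃ s, Tendsto (fun N => ∑ k ∈ range N, β k) atTop (𝓝 s)
  · rw [serSum, dif_pos hex]; exact hex.choose_spec
  · exact absurd (dif_neg hex) h

lemma serSum_eq_top_of_eq_top (hβ : ∀ n, β n ≠ ⊥) {k : ℕ} (hk : β k = ⊤) : serSum β = ⊤ := by
  refine serSum_eq_of_tendsto (tendsto_const_nhds.congr' ?_)
  filter_upwards [eventually_gt_atTop k] with N hN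
  rw [← add_sum_erase _ _ (mem_range.mpr hN), hk,
    EReal.top_add_of_ne_bot (sum_induction _ (· ≠ ⊥) (fun x y hx hy => by simp [hx, hy])
      (EReal.zero_ne_bot) fun i _ => hβ i)]

lemma serSum_add (hβ : serSum β ≠ ⊤) (hγ : serSum γ ≠ ⊤) :
    serSum (fun n => β n + γ n) = serSum β + serSum γ :=
  serSum_eq_of_tendsto <| by
    simpa only [sum_add_distrib] using
      EReal.tendsto_add_of_ne_top (tendsto_serSum hβ) (tendsto_serSum hγ) hβ hγ

lemma serSum_coe_const_mul (c : ℝ) (ha : serSum (fun n => (a n : EReal)) ≠ ⊤) :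
    serSum (fun n => ((c * a n : ℝ) : EReal)) = c * serSum (fun n => (a n : EReal)) :=
  serSum_eq_of_tendsto <| by
    have h := EReal.Tendsto.const_mul (tendsto_serSum ha) (.inl (EReal.coe_ne_bot c))
      (.inl (EReal.coe_ne_top c))
    simp only [← EReal.coe_finset_sum, ← EReal.coe_mul, mul_sum] at h ⊢
    exact h

lemma serSum_coe_mono (hab : ∀ n, a n ≤ b n) :
    serSum (fun n => (a n : EReal)) ≤ serSum (fun n => (b n : EReal)) := by
  rcases eq_or_ne (serSum fun n => (b n : EReal)) ⊤ with hb | hb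
  · exact hb ▸ le_top
  -- the partial sums of `a` are those of `b` minus the increasing partial sums of `b - a`
  set D : ℕ → ℝ := fun N => ∑ k ∈ range N, (b k - a k)
  have hD : Monotone D :=
    monotone_nat_of_le_succ fun N => by simp only [D, sum_range_succ]; linarith [hab N]
  set d : EReal := ⨆ N, (D N : EReal)
  have hDlim : Tendsto (fun N => (D N : EReal)) atTop (𝓝 d) :=
    tendsto_atTop_iSup (EReal.coe_strictMono.monotone.comp hD)
  have hd : 0 ≤ d := le_iSup_of_le 0 (by simp [D])
  have hsums : ∀ N,
      ∑ k ∈ range N, (a k : EReal) = ∑ k ∈ range N, (b k : EReal) + -(D N : EReal) := by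
    intro N
    simp only [D, ← EReal.coe_finset_sum, ← EReal.coe_neg, ← EReal.coe_add, sum_sub_distrib]
    congr 1
    ring
  have hlim := EReal.tendsto_add_of_ne_top (tendsto_serSum hb) hDlim.neg hb
    (by simpa using (EReal.bot_lt_zero.trans_le hd).ne')
  rw [serSum_eq_of_tendsto (by simpa only [hsums] using hlim)]
  exact add_le_of_nonpos_right (EReal.neg_le_zero.mpr hd)

lemma serSum_coe_lt_top_of_eventually_nonpos (h : ∀ᶠ n in atTop, a n ≤ 0) :
    serSum (fun n => (a n : EReal)) < ⊤ := by
  obtain ⟨N₀, hN₀⟩ := eventually_atTop.mp h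
  set A : ℕ → EReal := fun N => ∑ k ∈ range N, (a k : EReal)
  have hA : Antitone fun n => A (n + N₀) := antitone_nat_of_succ_le fun n => by
    simp only [A, Nat.add_right_comm n 1 N₀, sum_range_succ, ← EReal.coe_finset_sum,
      EReal.coe_le_coe_iff]
    linarith [hN₀ (n + N₀) (Nat.le_add_left N₀ n)]
  have hlim : Tendsto A atTop (𝓝 (⨅ n, A (n + N₀))) :=
    (tendsto_add_atTop_iff_nat N₀).mp (tendsto_atTop_iInf hA)
  rw [serSum_eq_of_tendsto hlim]
  exact (iInf_le _ 0).trans_lt (by simp [A, ← EReal.coe_finset_sum])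

lemma serSum_coe_const_mul_le {l μ : ℝ} (hl : 0 ≤ l) (ha : serSum (fun n => (a n : EReal)) ≤ μ) :
    serSum (fun n => ((l * a n : ℝ) : EReal)) ≤ ((l * μ : ℝ) : EReal) := by
  rw [serSum_coe_const_mul l (ha.trans_lt (EReal.coe_lt_top μ)).ne, EReal.coe_mul]
  exact mul_le_mul_of_nonneg_left ha (EReal.coe_nonneg.mpr hl)

lemma serSum_coe_le_of_le_mul_add_mul {c : ℕ → ℝ} {l l' μ μ' : ℝ} (hl : 0 ≤ l) (hl' : 0 ≤ l')
    (hc : ∀ n, c n ≤ l * a n + l' * b n) (ha : serSum (fun n => (a n : EReal)) ≤ μ)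
    (hb : serSum (fun n => (b n : EReal)) ≤ μ') :
    serSum (fun n => (c n : EReal)) ≤ ((l * μ + l' * μ' : ℝ) : EReal) := by
  have ha' := serSum_coe_const_mul_le hl ha
  have hb' := serSum_coe_const_mul_le hl' hb
  calc serSum (fun n => (c n : EReal))
      ≤ serSum (fun n => ((l * a n : ℝ) : EReal) + ((l' * b n : ℝ) : EReal)) := by
        simpa only [EReal.coe_add] using serSum_coe_mono hc
    _ = serSum (fun n => ((l * a n : ℝ) : EReal)) + serSum (fun n => ((l' * b n : ℝ) : EReal)) :=
        serSum_add (ha'.trans_lt (EReal.coe_lt_top _)).ne (hb'.trans_lt (EReal.coe_lt_top _)).ne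
    _ ≤ ((l * μ + l' * μ' : ℝ) : EReal) := by
        rw [EReal.coe_add]; exact add_le_add ha' hb'

end SerSum

section ValueFunction

variable {p σ : ℕ → ℝ} {u v : ℝ}

lemma Hval_le {W : ℝ → EReal} {w : ℕ → ℝ} (hw : w ∈ Sfeas σ u v) :
    Hval p σ W u v ≤ serSum (fun n => (p n : EReal) * W (w n / p n)) :=
  sInf_le (mem_image_of_mem _ hw)

lemma exists_mem_Sfeas_serSum_lt {W : ℝ → EReal} {μ : EReal} (h : Hval p σ W u v < μ) :
    ∃ w ∈ Sfeas σ u v, serSum (fun n => (p n : EReal) * W (w n / p n)) < μ := by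
  obtain ⟨_, ⟨w, hw, rfl⟩, hlt⟩ := sInf_lt_iff.mp h
  exact ⟨w, hw, hlt⟩

lemma Sfeas_nonempty_of_Hval_lt_top {W : ℝ → EReal} (h : Hval p σ W u v < ⊤) :
    (Sfeas σ u v).Nonempty := by
  by_contra hS
  rw [Hval, not_nonempty_iff_eq_empty.mp hS, image_empty, sInf_empty] at h
  exact lt_irrefl _ h

lemma mul_add_mul_mem_Sfeas {w w' : ℕ → ℝ} {u' v' l l' : ℝ} (hw : w ∈ Sfeas σ u v)
    (hw' : w' ∈ Sfeas σ u' v') (hl : 0 ≤ l) (hl' : 0 ≤ l') :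
    (fun n => l * w n + l' * w' n) ∈ Sfeas σ (l * u + l' * u') (l * v + l' * v') := by
  refine ⟨fun n => add_nonneg (mul_nonneg hl (hw.1 n)) (mul_nonneg hl' (hw'.1 n)), ?_, ?_⟩
  · simpa only [Finset.sum_add_distrib, ← Finset.mul_sum] using
      (hw.2.1.const_mul l).add (hw'.2.1.const_mul l')
  · simpa only [mul_add, mul_left_comm (σ _), Finset.sum_add_distrib, ← Finset.mul_sum] using
      (hw.2.2.const_mul l).add (hw'.2.2.const_mul l')

variable {D : Set ℝ} {f : ℝ → ℝ}

lemma mem_of_serSum_extendByTop_ne_top (hp : ∀ n, 0 < p n) {x : ℕ → ℝ}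
    (h : serSum (fun n => (p n : EReal) * extendByTop D f (x n)) ≠ ⊤) (n : ℕ) : x n ∈ D := by
  by_contra hn
  refine h (serSum_eq_top_of_eq_top (fun k => ?_) (k := n) ?_)
  · by_cases hk : x k ∈ D
    · rw [extendByTop_of_mem hk, ← EReal.coe_mul]; exact EReal.coe_ne_bot _
    · rw [extendByTop_of_notMem hk, EReal.coe_mul_top_of_pos (hp k)]; exact top_ne_bot
  · rw [extendByTop_of_notMem hn, EReal.coe_mul_top_of_pos (hp n)]

lemma serSum_extendByTop_of_mem {x : ℕ → ℝ} (hx : ∀ n, x n ∈ D) :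
    serSum (fun n => (p n : EReal) * extendByTop D f (x n)) =
      serSum (fun n => ((p n * f (x n) : ℝ) : EReal)) := by
  congr 1
  funext n
  rw [extendByTop_of_mem (hx n), EReal.coe_mul]

lemma Hval_extendByTop_convex (hp : ∀ n, 0 < p n) (hf : ConvexOn ℝ D f)
    {u' v' l μ μ' : ℝ} (hl0 : 0 ≤ l) (hl1 : l ≤ 1)
    (h : Hval p σ (extendByTop D f) u v < μ) (h' : Hval p σ (extendByTop D f) u' v' < μ') :
    Hval p σ (extendByTop D f) (l * u + (1 - l) * u') (l * v + (1 - l) * v') ≤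
      ((l * μ + (1 - l) * μ' : ℝ) : EReal) := by
  have hl1' : 0 ≤ 1 - l := sub_nonneg.mpr hl1
  obtain ⟨w, hw, hlt⟩ := exists_mem_Sfeas_serSum_lt h
  obtain ⟨w', hw', hlt'⟩ := exists_mem_Sfeas_serSum_lt h'
  have hD := mem_of_serSum_extendByTop_ne_top hp hlt.ne_top
  have hD' := mem_of_serSum_extendByTop_ne_top hp hlt'.ne_top
  rw [serSum_extendByTop_of_mem hD] at hlt
  rw [serSum_extendByTop_of_mem hD'] at hlt'
  have hdiv : ∀ n, (l * w n + (1 - l) * w' n) / p n = l * (w n / p n) + (1 - l) * (w' n / p n) :=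
    fun n => by field_simp [(hp n).ne']
  have hD'' : ∀ n, (l * w n + (1 - l) * w' n) / p n ∈ D :=
    fun n => hdiv n ▸ hf.1 (hD n) (hD' n) hl0 hl1' (by ring)
  have hterm : ∀ n, p n * f ((l * w n + (1 - l) * w' n) / p n) ≤
      l * (p n * f (w n / p n)) + (1 - l) * (p n * f (w' n / p n)) := fun n => by
    have := mul_le_mul_of_nonneg_left (hf.2 (hD n) (hD' n) hl0 hl1' (by ring)) (hp n).le
    rw [hdiv n]
    simp only [smul_eq_mul] at this
    linarith
  calc Hval p σ (extendByTop D f) (l * u + (1 - l) * u') (l * v + (1 - l) * v')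
      ≤ serSum (fun n => (p n : EReal) * extendByTop D f ((l * w n + (1 - l) * w' n) / p n)) :=
        Hval_le (mul_add_mul_mem_Sfeas hw hw' hl0 hl1')
    _ = serSum (fun n => ((p n * f ((l * w n + (1 - l) * w' n) / p n) : ℝ) : EReal)) :=
        serSum_extendByTop_of_mem hD''
    _ ≤ ((l * μ + (1 - l) * μ' : ℝ) : EReal) :=
        serSum_coe_le_of_le_mul_add_mul hl0 hl1' hterm hlt.le hlt'.le

lemma Hval_extendByTop_mono (hp : ∀ n, 0 < p n) {D' : Set ℝ} {g : ℝ → ℝ} (hD : Ici 0 ⊆ D)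
    (hfg : ∀ x ∈ D', f x ≤ g x) (u v : ℝ) :
    Hval p σ (extendByTop D f) u v ≤ Hval p σ (extendByTop D' g) u v := by
  refine le_sInf ?_
  rintro _ ⟨w, hw, rfl⟩
  rcases eq_or_ne (serSum fun n => (p n : EReal) * extendByTop D' g (w n / p n)) ⊤ with htop | hne
  · exact le_top.trans_eq htop.symm
  have hD' := mem_of_serSum_extendByTop_ne_top hp hne
  have hx : ∀ n, w n / p n ∈ D := fun n => hD (div_nonneg (hw.1 n) (hp n).le)
  calc Hval p σ (extendByTop D f) u v
      ≤ serSum (fun n => (p n : EReal) * extendByTop D f (w n / p n)) := Hval_le hw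
    _ = serSum (fun n => ((p n * f (w n / p n) : ℝ) : EReal)) := serSum_extendByTop_of_mem hx
    _ ≤ serSum (fun n => ((p n * g (w n / p n) : ℝ) : EReal)) :=
        serSum_coe_mono fun n => mul_le_mul_of_nonneg_left (hfg _ (hD' n)) (hp n).le
    _ = serSum (fun n => (p n : EReal) * extendByTop D' g (w n / p n)) :=
        (serSum_extendByTop_of_mem hD').symm

lemma Hval_extendByTop_lt_top (hp : ∀ n, 1 ≤ p n) (hD : Ici 0 ⊆ D)
    (hf : ∀ x ∈ Icc (0 : ℝ) 1, f x ≤ 0) (hS : (Sfeas σ u v).Nonempty) :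
    Hval p σ (extendByTop D f) u v < ⊤ := by
  obtain ⟨w, hw⟩ := hS
  have hp0 : ∀ n, 0 < p n := fun n => one_pos.trans_le (hp n)
  have hw0 : Tendsto w atTop (𝓝 0) :=
    ((hasSum_iff_tendsto_nat_of_nonneg hw.1 u).mpr hw.2.1).summable.tendsto_atTop_zero
  have hev : ∀ᶠ n in atTop, p n * f (w n / p n) ≤ 0 := by
    filter_upwards [hw0.eventually (eventually_le_nhds one_pos)] with n hn
    exact mul_nonpos_of_nonneg_of_nonpos (hp0 n).le (hf _
      ⟨div_nonneg (hw.1 n) (hp0 n).le, div_le_one_of_le₀ (hn.trans (hp n)) (hp0 n).le⟩)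
  calc Hval p σ (extendByTop D f) u v
      ≤ serSum (fun n => (p n : EReal) * extendByTop D f (w n / p n)) := Hval_le hw
    _ = serSum (fun n => ((p n * f (w n / p n) : ℝ) : EReal)) :=
        serSum_extendByTop_of_mem fun n => hD (div_nonneg (hw.1 n) (hp0 n).le)
    _ < ⊤ := serSum_coe_lt_top_of_eventually_nonpos hev

end ValueFunction

/-- Convexity of the value function `H_W`, the comparison `H_BE ≤ H_MB ≤ H_FD`, and the
domain relations `dom H_FD ⊆ dom H_MB = dom H_BE = dom S`. -/
theorem stmt5 (p σ : ℕ → ℝ) (hp : ∀ n, 1 ≤ p n) :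
    (∀ W ∈ ({EBEe, EMBe, EFDe} : Set (ℝ → EReal)),
      ∀ u v u' v' : ℝ, ∀ l : ℝ, 0 < l → l < 1 → ∀ μ μ' : ℝ,
        Hval p σ W u v < (μ : EReal) → Hval p σ W u' v' < (μ' : EReal) →
        Hval p σ W (l * u + (1 - l) * u') (l * v + (1 - l) * v') ≤
          ((l * μ + (1 - l) * μ' : ℝ) : EReal)) ∧
    (∀ u v : ℝ, Hval p σ EBEe u v ≤ Hval p σ EMBe u v ∧
      Hval p σ EMBe u v ≤ Hval p σ EFDe u v) ∧
    {z : ℝ × ℝ | Hval p σ EFDe z.1 z.2 < ⊤} ⊆ {z : ℝ × ℝ | Hval p σ EMBe z.1 z.2 < ⊤} ∧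
    {z : ℝ × ℝ | Hval p σ EMBe z.1 z.2 < ⊤} = {z : ℝ × ℝ | Hval p σ EBEe z.1 z.2 < ⊤} ∧
    {z : ℝ × ℝ | Hval p σ EBEe z.1 z.2 < ⊤} = {z : ℝ × ℝ | (Sfeas σ z.1 z.2).Nonempty} := by
  have hp0 : ∀ n, 0 < p n := fun n => one_pos.trans_le (hp n)
  have hBE_MB : ∀ u v, Hval p σ EBEe u v ≤ Hval p σ EMBe u v := by
    rw [EBEe_eq_extendByTop, EMBe_eq_extendByTop]
    exact Hval_extendByTop_mono hp0 subset_rfl fun _ => entBE_le_entMB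
  have hMB_FD : ∀ u v, Hval p σ EMBe u v ≤ Hval p σ EFDe u v := by
    rw [EMBe_eq_extendByTop, EFDe_eq_extendByTop]
    exact Hval_extendByTop_mono hp0 subset_rfl fun _ => entMB_le_entFD
  have hS_MB : ∀ u v, (Sfeas σ u v).Nonempty → Hval p σ EMBe u v < ⊤ := by
    rw [EMBe_eq_extendByTop]
    exact fun u v => Hval_extendByTop_lt_top hp subset_rfl fun _ => entMB_nonpos
  refine ⟨?_, fun u v => ⟨hBE_MB u v, hMB_FD u v⟩, fun z hz => (hMB_FD _ _).trans_lt hz, ?_, ?_⟩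
  · simp only [mem_insert_iff, mem_singleton_iff]
    rintro W (rfl | rfl | rfl) u v u' v' l hl0 hl1 μ μ'
    · rw [EBEe_eq_extendByTop]
      exact Hval_extendByTop_convex hp0 convexOn_entBE hl0.le hl1.le
    · rw [EMBe_eq_extendByTop]
      exact Hval_extendByTop_convex hp0 convexOn_entMB hl0.le hl1.le
    · rw [EFDe_eq_extendByTop]
      exact Hval_extendByTop_convex hp0 convexOn_entFD hl0.le hl1.le
  · ext z
    exact ⟨fun hz => (hBE_MB _ _).trans_lt hz,
      fun hz => hS_MB _ _ (Sfeas_nonempty_of_Hval_lt_top hz)⟩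
  · ext z
    exact ⟨Sfeas_nonempty_of_Hval_lt_top, fun hz => (hBE_MB _ _).trans_lt (hS_MB _ _ hz)⟩
end

section
/- Let (p_n)_{n≥1} ⊆ [1,∞) and suppose σ_n = σ_1 for all n ≥ 1. Then for each W ∈ {E_BE, E_MB, E_FD} and every u > 0, H_W(u, u σ_1) = −∞. In other words, H_W equals −∞ on the relative interior ℝ₊^*·(1,σ_1) of its domain. -/
open Filter

lemma coe_range_sum (g : ℕ → ℝ) (K : ℕ) :
    ∑ k ∈ Finset.range K, ((g k : ℝ) : EReal) = ((∑ k ∈ Finset.range K, g k : ℝ) : EReal) := by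
  induction K with
  | zero => simp
  | succ n ih => rw [Finset.sum_range_succ, Finset.sum_range_succ, ih, EReal.coe_add]

lemma serSum_eq {β : ℕ → EReal} {l : EReal}
    (h : Tendsto (fun N => ∑ k ∈ Finset.range N, β k) atTop (nhds l)) : serSum β = l := by
  have hex : ∃ l : EReal, Tendsto (fun N => ∑ k ∈ Finset.range N, β k) atTop (nhds l) := ⟨l, h⟩
  rw [serSum, dif_pos hex]
  exact tendsto_nhds_unique hex.choose_spec h

lemma key (p σ : ℕ → ℝ) (hp : ∀ n, 1 ≤ p n) (hσ : ∀ n, σ n = σ 0)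
    (W : ℝ → EReal) (hW0 : W 0 = 0)
    (hW : ∀ t : ℝ, 0 < t → t ≤ 1 → ∃ r : ℝ, W t = (r : EReal) ∧ r ≤ t * Real.log t)
    (u : ℝ) (hu : 0 < u) : Hval p σ W u (u * σ 0) = ⊥ := by
  have hppos : ∀ n, (0:ℝ) < p n := fun n => lt_of_lt_of_le one_pos (hp n)
  have main : ∀ M : ℝ, ∃ x ∈ ((fun w => serSum fun n => (p n : EReal) * W (w n / p n)) ''
      Sfeas σ u (u * σ 0)), x < (M : EReal) := by
    intro M
    obtain ⟨N, hN⟩ := exists_nat_ge (max (max u 1) (Real.exp ((u * Real.log u - M)/u) + 1))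
    have hN1 : (1:ℝ) ≤ N := le_trans (le_trans (le_max_right u 1) (le_max_left _ _)) hN
    have hNpos : (0:ℝ) < N := lt_of_lt_of_le one_pos hN1
    have hNne : (N:ℝ) ≠ 0 := ne_of_gt hNpos
    have hNn0 : N ≠ 0 := by exact_mod_cast fun h => hNne (by exact_mod_cast h)
    have huN : u ≤ N := le_trans (le_trans (le_max_left u 1) (le_max_left _ _)) hN
    have hlogN : u * Real.log u - u * Real.log N < M := by
      have h1 : Real.exp ((u * Real.log u - M)/u) < N :=
        lt_of_lt_of_le (lt_add_one _) (le_trans (le_max_right _ _) hN)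
      have h2 : (u * Real.log u - M)/u < Real.log N := by
        have := Real.log_lt_log (Real.exp_pos _) h1
        rwa [Real.log_exp] at this
      have h3 := (div_lt_iff₀ hu).mp h2
      nlinarith
    set w : ℕ → ℝ := fun n => if n < N then u / N else 0 with hwdef
    have hw0 : ∀ n, 0 ≤ w n := by
      intro n; simp only [hwdef]; split
      · positivity
      · exact le_refl 0
    have hsum : ∀ K, N ≤ K → ∑ k ∈ Finset.range K, w k = u := by
      intro K hK
      rw [← Finset.sum_subset (Finset.range_subset_range.mpr hK) (fun x _ hx => by
        simp only [Finset.mem_range] at hx; simp [hwdef, hx])]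
      rw [Finset.sum_congr rfl (fun k hk => if_pos (Finset.mem_range.mp hk))]
      rw [Finset.sum_const, Finset.card_range, nsmul_eq_mul]
      field_simp
    have hT1 : Tendsto (fun K => ∑ k ∈ Finset.range K, w k) atTop (nhds u) := by
      apply Tendsto.congr' _ (tendsto_const_nhds (x := u))
      filter_upwards [eventually_ge_atTop N] with K hK
      exact (hsum K hK).symm
    have hT2 : Tendsto (fun K => ∑ k ∈ Finset.range K, σ k * w k) atTop (nhds (u * σ 0)) := by
      apply Tendsto.congr' _ (tendsto_const_nhds (x := u * σ 0))
      filter_upwards [eventually_ge_atTop N] with K hK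
      have : ∑ k ∈ Finset.range K, σ k * w k = σ 0 * ∑ k ∈ Finset.range K, w k := by
        rw [Finset.mul_sum]
        exact Finset.sum_congr rfl (fun k _ => by rw [hσ k])
      rw [this, hsum K hK, mul_comm]
    have hfeas : w ∈ Sfeas σ u (u * σ 0) := ⟨hw0, hT1, hT2⟩
    have huN1 : u / N ≤ 1 := (div_le_one hNpos).mpr huN
    have hterm : ∀ n, ∃ r : ℝ, (p n : EReal) * W (w n / p n) = ((p n * r : ℝ) : EReal) ∧
        p n * r ≤ (if n < N then (u/N) * Real.log (u/N) else 0) := by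
      intro n
      by_cases hn : n < N
      · have hwn : w n = u / N := if_pos hn
        set t : ℝ := (u / N) / p n with htdef
        have htpos : 0 < t := div_pos (div_pos hu hNpos) (hppos n)
        have htle : t ≤ u / N := div_le_self (le_of_lt (div_pos hu hNpos)) (hp n)
        obtain ⟨r, hre, hrle⟩ := hW t htpos (le_trans htle huN1)
        refine ⟨r, ?_, ?_⟩
        · rw [hwn, ← htdef, hre, ← EReal.coe_mul]
        · rw [if_pos hn]
          have h1 : p n * r ≤ p n * (t * Real.log t) :=
            mul_le_mul_of_nonneg_left hrle (le_of_lt (hppos n))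
          have hpne : p n ≠ 0 := ne_of_gt (hppos n)
          have h2 : p n * (t * Real.log t) = (u/N) * Real.log t := by
            rw [htdef]; field_simp
          have h3 : Real.log t ≤ Real.log (u/N) := Real.log_le_log htpos htle
          have h4 : (u/N) * Real.log t ≤ (u/N) * Real.log (u/N) :=
            mul_le_mul_of_nonneg_left h3 (by positivity)
          linarith
      · have hwn : w n = 0 := if_neg hn
        refine ⟨0, ?_, by simp [hn]⟩
        rw [hwn, zero_div, hW0, mul_zero, mul_zero, EReal.coe_zero]
    choose r hre hrb using hterm
    have hrzero : ∀ n, ¬ n < N → p n * r n = 0 := by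
      intro n hn
      have := hre n
      have hwn : w n = 0 := if_neg hn
      rw [hwn, zero_div, hW0, mul_zero] at this
      exact (EReal.coe_eq_zero).mp this.symm
    set S : ℝ := ∑ k ∈ Finset.range N, p k * r k with hSdef
    have hES : ∀ K, N ≤ K →
        ∑ k ∈ Finset.range K, (p k : EReal) * W (w k / p k) = ((S : ℝ) : EReal) := by
      intro K hK
      have h1 : ∀ k, ((p k : EReal) * W (w k / p k)) = (((p k * r k : ℝ)) : EReal) := hre
      calc ∑ k ∈ Finset.range K, (p k : EReal) * W (w k / p k)
          = ∑ k ∈ Finset.range K, (((p k * r k : ℝ)) : EReal) :=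
            Finset.sum_congr rfl (fun k _ => h1 k)
        _ = (((∑ k ∈ Finset.range K, p k * r k : ℝ)) : EReal) :=
            coe_range_sum _ K
        _ = ((S : ℝ) : EReal) := by
            congr 1
            rw [hSdef, ← Finset.sum_subset (Finset.range_subset_range.mpr hK) (fun x _ hx => by
              simp only [Finset.mem_range] at hx; exact hrzero x hx)]
    have hTS : Tendsto (fun K => ∑ k ∈ Finset.range K, (p k : EReal) * W (w k / p k))
        atTop (nhds ((S : ℝ) : EReal)) := by
      apply Tendsto.congr' _ (tendsto_const_nhds (x := ((S:ℝ) : EReal)))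
      filter_upwards [eventually_ge_atTop N] with K hK
      exact (hES K hK).symm
    have hSbound : S < M := by
      have h1 : S ≤ ∑ k ∈ Finset.range N, (u/N) * Real.log (u/N) := by
        apply Finset.sum_le_sum
        intro k hk
        have := hrb k
        rwa [if_pos (Finset.mem_range.mp hk)] at this
      rw [Finset.sum_const, Finset.card_range, nsmul_eq_mul] at h1
      have h2 : (N:ℝ) * ((u/N) * Real.log (u/N)) = u * Real.log (u/N) := by
        field_simp
      rw [h2, Real.log_div (ne_of_gt hu) hNne] at h1
      nlinarith
    refine ⟨((S:ℝ) : EReal), ⟨w, hfeas, serSum_eq hTS⟩, ?_⟩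
    exact_mod_cast hSbound
  rw [Hval, sInf_eq_bot]
  intro b hb
  induction b using EReal.rec with
  | bot => exact absurd hb (lt_irrefl _)
  | coe M => exact main M
  | top =>
    obtain ⟨x, hx, hlt⟩ := main 0
    exact ⟨x, hx, lt_of_lt_of_le hlt le_top⟩

/-- When the sequence `σ` is constant, `H_W(u, uσ_1) = −∞` for every `u > 0`, i.e. `H_W`
equals `−∞` on the relative interior `ℝ₊^*·(1,σ_1)` of its domain. -/
theorem stmt9 (p σ : ℕ → ℝ) (hp : ∀ n, 1 ≤ p n) (hσ : ∀ n, σ n = σ 0) :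
    ∀ W ∈ ({EBEe, EMBe, EFDe} : Set (ℝ → EReal)),
      ∀ u : ℝ, 0 < u → Hval p σ W u (u * σ 0) = ⊥ := by
  intro W hW u hu
  simp only [Set.mem_insert_iff, Set.mem_singleton_iff] at hW
  rcases hW with rfl | rfl | rfl
  · refine key p σ hp hσ _ (by simp [EBEe]) ?_ u hu
    intro t ht ht1
    refine ⟨t * Real.log t - (1 + t) * Real.log (1 + t), if_pos (le_of_lt ht), ?_⟩
    have h1 : 0 ≤ (1 + t) * Real.log (1 + t) :=
      mul_nonneg (by linarith) (Real.log_nonneg (by linarith))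
    linarith
  · refine key p σ hp hσ _ (by simp [EMBe]) ?_ u hu
    intro t ht ht1
    refine ⟨t * (Real.log t - 1), if_pos (le_of_lt ht), ?_⟩
    nlinarith
  · refine key p σ hp hσ _ (by simp [EFDe]) ?_ u hu
    intro t ht ht1
    refine ⟨t * Real.log t + (1 - t) * Real.log (1 - t), if_pos ⟨le_of_lt ht, ht1⟩, ?_⟩
    have h1 : (1 - t) * Real.log (1 - t) ≤ 0 :=
      mul_nonpos_of_nonneg_of_nonpos (by linarith) (Real.log_nonpos (by linarith) (by linarith))
    linarith
end

section
/- Let (p_n)_{n≥1} ⊆ [1,∞) and (σ_n)_{n≥1} ⊆ (0,∞) with σ_n → ∞, and assume f(x̄) < ∞ for some x̄ ∈ ℝ, where f(x) := Σ_{n≥1} p_n e^{σ_n x}. Then there exists α ∈ [0,∞) such that I := (−∞,−α) ⊆ dom f ⊆ (−∞,0) ∩ cl I; f is strictly convex and strictly increasing on dom f; lim_{x→−∞} f(x) = 0 = inf f; f is differentiable at every x ∈ I with f'(x) = Σ_{n≥1} p_n σ_n e^{σ_n x}; f' is increasing and continuous on I with lim_{x→−∞} f'(x) = 0 and lim_{x↑−α}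 f'(x) = Σ_{n≥1} p_n σ_n e^{−σ_n α} =: γ ∈ (0,∞]; and f'(I) = (0,γ). -/
open Filter
open scoped ENNReal

/-- The real-valued sum `f(x) = Σ_{n} p_n e^{σ_n x}` (junk value when not summable). -/
noncomputable def fR (p σ : ℕ → ℝ) (x : ℝ) : ℝ := ∑' n, p n * Real.exp (σ n * x)

/-- The effective domain of `f`: the set of `x` where the series `Σ p_n e^{σ_n x}` converges. -/
def fDom (p σ : ℕ → ℝ) : Set ℝ := {x : ℝ | Summable fun n => p n * Real.exp (σ n * x)}

/-- The term-by-term derivative `f'(x) = Σ_n p_n σ_n e^{σ_n x}` (junk value when not summable). -/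
noncomputable def fD (p σ : ℕ → ℝ) (x : ℝ) : ℝ := ∑' n, p n * σ n * Real.exp (σ n * x)

/-- `γ := Σ_n p_n σ_n e^{−σ_n α} ∈ (0,+∞]`, as an extended real. -/
noncomputable def gammaE (p σ : ℕ → ℝ) (α : ℝ) : EReal :=
  ((∑' n, ENNReal.ofReal (p n * σ n * Real.exp (σ n * (-α))) : ℝ≥0∞) : EReal)

/-!
Each term `p_n e^{σ_n x}` is positive, strictly increasing and strictly convex, and these
properties pass to the sum on its domain, which is a lower set; as `p_n ≥ 1`, the terms do not
tend to `0` for `x ≥ 0`, so the domain lies between `(-∞, -α)` and `(-∞, -α]` for some `α ≥ 0`.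
For `x < y` the bound `σ e^{σ x} ≤ e^{σ y} / (y - x)` dominates the differentiated series near
`x` by the series at `y`, so it is the derivative, and it is continuous and strictly increasing
on `(-∞, -α)`. Dominated convergence gives the limits `0` at `-∞`; at `-α` the `ℝ≥0∞`-valued
derivative series is monotone and lower semicontinuous, hence left-continuous, with value `γ`.
The intermediate value theorem then identifies `f'((-∞, -α)) = (0, γ)`.
-/

open Set Real
open scoped Topology

section Termwise

variable {ι : Type*} [Nonempty ι] {s : Set ℝ} {f : ι → ℝ → ℝ}

theorem strictMonoOn_tsum (hf : ∀ i, StrictMonoOn (f i) s)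
    (hsum : ∀ x ∈ s, Summable fun i => f i x) : StrictMonoOn (fun x => ∑' i, f i x) s := by
  intro x hx y hy hxy
  obtain ⟨i⟩ := ‹Nonempty ι›
  exact (hsum x hx).tsum_lt_tsum (fun j => (hf j hx hy hxy).le) (hf i hx hy hxy) (hsum y hy)

theorem strictConvexOn_tsum (hs : Convex ℝ s) (hf : ∀ i, StrictConvexOn ℝ s (f i))
    (hsum : ∀ x ∈ s, Summable fun i => f i x) : StrictConvexOn ℝ s fun x => ∑' i, f i x := by
  refine ⟨hs, fun x hx y hy hxy a b ha hb hab => ?_⟩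
  obtain ⟨i⟩ := ‹Nonempty ι›
  have hlt := fun j => (hf j).2 hx hy hxy ha hb hab
  have hsx := (hsum x hx).mul_left a
  have hsy := (hsum y hy).mul_left b
  simp only [smul_eq_mul] at hlt ⊢
  calc ∑' j, f j (a * x + b * y) < ∑' j, (a * f j x + b * f j y) :=
        (hsum _ (hs hx hy ha.le hb.le hab)).tsum_lt_tsum (fun j => (hlt j).le) (hlt i)
          (hsx.add hsy)
    _ = a * ∑' j, f j x + b * ∑' j, f j y := by
        rw [hsx.tsum_add hsy, tsum_mul_left, tsum_mul_left]

end Termwise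

theorem tendsto_nhdsLT_of_monotone_of_lowerSemicontinuousAt {β : Type*} [LinearOrder β]
    [TopologicalSpace β] [OrderTopology β] {g : ℝ → β} {a : ℝ} (hg : Monotone g)
    (hga : LowerSemicontinuousAt g a) : Tendsto g (𝓝[<] a) (𝓝 (g a)) :=
  tendsto_order.2 ⟨fun b hb => (hga b hb).filter_mono nhdsWithin_le_nhds,
    fun _ hb => eventually_nhdsWithin_of_forall fun _ hx => (hg (le_of_lt hx)).trans_lt hb⟩

theorem IsLowerSet.Iio_csSup_subset {S : Set ℝ} (hS : IsLowerSet S) (hne : S.Nonempty) :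
    Iio (sSup S) ⊆ S := fun _ hx =>
  let ⟨_, hy, hxy⟩ := exists_lt_of_lt_csSup hne hx
  hS hxy.le hy

theorem mem_image_Iio_of_tendsto {g : ℝ → ℝ} {a L y : ℝ} {γ : EReal}
    (hg : ContinuousOn g (Iio a)) (hbot : Tendsto g atBot (𝓝 L))
    (htop : Tendsto (fun x => (g x : EReal)) (𝓝[<] a) (𝓝 γ)) (hLy : L < y) (hyγ : y < γ) :
    y ∈ g '' Iio a := by
  obtain ⟨x₂, hyx₂, hx₂a⟩ :=
    ((htop.eventually (eventually_gt_nhds hyγ)).and self_mem_nhdsWithin).exists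
  obtain ⟨x₁, hx₁y, hx₁x₂⟩ :=
    ((hbot.eventually (eventually_lt_nhds hLy)).and (eventually_le_atBot x₂)).exists
  have hsub : Icc x₁ x₂ ⊆ Iio a := fun z hz => hz.2.trans_lt hx₂a
  obtain ⟨x, hx, rfl⟩ := intermediate_value_Icc hx₁x₂ (hg.mono hsub)
    ⟨hx₁y.le, EReal.coe_lt_coe_iff.1 hyx₂ |>.le⟩
  exact ⟨x, hsub hx, rfl⟩

section ExpSeries

variable {c σ : ℕ → ℝ} {x y : ℝ}

theorem mul_exp_mul_le_mul_exp_mul {a b : ℝ} (ha : 0 ≤ a) (hb : 0 ≤ b) (h : x ≤ y) :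
    a * exp (b * x) ≤ a * exp (b * y) :=
  mul_le_mul_of_nonneg_left (exp_le_exp.2 (mul_le_mul_of_nonneg_left h hb)) ha

theorem strictMono_const_mul_exp_mul {a b : ℝ} (ha : 0 < a) (hb : 0 < b) :
    StrictMono fun x => a * exp (b * x) :=
  fun _ _ h => mul_lt_mul_of_pos_left (exp_lt_exp.2 (mul_lt_mul_of_pos_left h hb)) ha

theorem strictConvexOn_const_mul_exp_mul {a b : ℝ} (ha : 0 < a) (hb : b ≠ 0) :
    StrictConvexOn ℝ univ fun x => a * exp (b * x) := by
  refine ⟨convex_univ, fun x _ y _ hxy s t hs ht hst => ?_⟩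
  have hexp := strictConvexOn_exp.2 (mem_univ (b * x)) (mem_univ (b * y))
    ((mul_right_injective₀ hb).ne hxy) hs ht hst
  simp only [smul_eq_mul] at hexp ⊢
  calc a * exp (b * (s * x + t * y)) = a * exp (s * (b * x) + t * (b * y)) := by ring_nf
    _ < a * (s * exp (b * x) + t * exp (b * y)) := mul_lt_mul_of_pos_left hexp ha
    _ = s * (a * exp (b * x)) + t * (a * exp (b * y)) := by ring

theorem summable_mul_exp_of_le (hc : ∀ n, 0 ≤ c n) (hσ : ∀ n, 0 ≤ σ n) (hxy : x ≤ y)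
    (hy : Summable fun n => c n * exp (σ n * y)) : Summable fun n => c n * exp (σ n * x) :=
  hy.of_nonneg_of_le (fun n => mul_nonneg (hc n) (exp_pos _).le) fun n =>
    mul_exp_mul_le_mul_exp_mul (hc n) (hσ n) hxy

theorem summable_mul_mul_exp_of_lt (hc : ∀ n, 0 ≤ c n) (hσ : ∀ n, 0 ≤ σ n) (hxy : x < y)
    (hy : Summable fun n => c n * exp (σ n * y)) :
    Summable fun n => c n * σ n * exp (σ n * x) := by
  have hδ : 0 < y - x := sub_pos.2 hxy
  refine (hy.mul_left (y - x)⁻¹).of_nonneg_of_le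
    (fun n => mul_nonneg (mul_nonneg (hc n) (hσ n)) (exp_pos _).le) fun n => ?_
  have hσδ : σ n * (y - x) ≤ exp (σ n * (y - x)) := by
    linarith [add_one_le_exp (σ n * (y - x))]
  have hsplit : exp (σ n * y) = exp (σ n * x) * exp (σ n * (y - x)) := by
    rw [← exp_add]; ring_nf
  rw [hsplit, le_inv_mul_iff₀ hδ]
  calc (y - x) * (c n * σ n * exp (σ n * x))
      = c n * exp (σ n * x) * (σ n * (y - x)) := by ring
    _ ≤ c n * exp (σ n * x) * exp (σ n * (y - x)) :=
        mul_le_mul_of_nonneg_left hσδ (mul_nonneg (hc n) (exp_pos _).le)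
    _ = c n * (exp (σ n * x) * exp (σ n * (y - x))) := by ring

theorem tendsto_tsum_mul_exp_atBot (hc : ∀ n, 0 ≤ c n) (hσ : ∀ n, 0 < σ n)
    (hy : Summable fun n => c n * exp (σ n * y)) :
    Tendsto (fun x => ∑' n, c n * exp (σ n * x)) atBot (𝓝 0) := by
  have hterm : ∀ n, Tendsto (fun x => c n * exp (σ n * x)) atBot (𝓝 0) := fun n => by
    simpa using (tendsto_exp_atBot.comp (tendsto_id.const_mul_atBot (hσ n))).const_mul (c n)
  have hbound : ∀ᶠ x in atBot, ∀ n, ‖c n * exp (σ n * x)‖ ≤ c n * exp (σ n * y) := by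
    filter_upwards [eventually_le_atBot y] with x hx n
    rw [norm_of_nonneg (mul_nonneg (hc n) (exp_pos _).le)]
    exact mul_exp_mul_le_mul_exp_mul (hc n) (hσ n).le hx
  simpa using tendsto_tsum_of_dominated_convergence hy hterm hbound

theorem hasDerivAt_tsum_mul_exp (hc : ∀ n, 0 ≤ c n) (hσ : ∀ n, 0 ≤ σ n) (hxy : x < y)
    (hy : Summable fun n => c n * exp (σ n * y)) :
    HasDerivAt (fun z => ∑' n, c n * exp (σ n * z)) (∑' n, c n * σ n * exp (σ n * x)) x := by
  obtain ⟨t, hxt, hty⟩ := exists_between hxy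
  refine hasDerivAt_tsum_of_isPreconnected (g := fun n z => c n * exp (σ n * z))
    (g' := fun n z => c n * σ n * exp (σ n * z)) (summable_mul_mul_exp_of_lt hc hσ hty hy)
    isOpen_Iio isPreconnected_Iio (fun n z _ => ?_) (fun n z hz => ?_) hxt
    (summable_mul_exp_of_le hc hσ hxy.le hy) hxt
  · exact (((hasDerivAt_id' z).const_mul (σ n)).exp.const_mul (c n)).congr_deriv (by ring)
  · rw [norm_of_nonneg (mul_nonneg (mul_nonneg (hc n) (hσ n)) (exp_pos _).le)]
    exact mul_exp_mul_le_mul_exp_mul (mul_nonneg (hc n) (hσ n)) (hσ n) (le_of_lt hz)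

theorem tendsto_tsum_ofReal_mul_exp_nhdsLT (hc : ∀ n, 0 ≤ c n) (hσ : ∀ n, 0 ≤ σ n) (a : ℝ) :
    Tendsto (fun x => ∑' n, ENNReal.ofReal (c n * exp (σ n * x))) (𝓝[<] a)
      (𝓝 (∑' n, ENNReal.ofReal (c n * exp (σ n * a)))) :=
  tendsto_nhdsLT_of_monotone_of_lowerSemicontinuousAt
    (fun _ _ h => ENNReal.tsum_le_tsum fun n => ENNReal.ofReal_le_ofReal <|
      mul_exp_mul_le_mul_exp_mul (hc n) (hσ n) h)
    (lowerSemicontinuous_tsum (fun n =>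
      (ENNReal.continuous_ofReal.comp (by fun_prop)).lowerSemicontinuous) a)

end ExpSeries

section DirichletSeries

variable {p σ : ℕ → ℝ} {α x : ℝ}

theorem isLowerSet_fDom (hp : ∀ n, 0 ≤ p n) (hσ : ∀ n, 0 ≤ σ n) : IsLowerSet (fDom p σ) :=
  fun _ _ hxy hy => summable_mul_exp_of_le hp hσ hxy hy

theorem fDom_subset_Iio_zero (hp : ∀ n, 1 ≤ p n) (hσ : ∀ n, 0 ≤ σ n) : fDom p σ ⊆ Iio 0 := by
  intro x hx
  rw [mem_Iio]
  by_contra! hx0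
  have hone : ∀ n, 1 ≤ p n * exp (σ n * x) := fun n =>
    one_le_mul_of_one_le_of_one_le (hp n) (one_le_exp (mul_nonneg (hσ n) hx0))
  linarith [ge_of_tendsto' (Summable.tendsto_atTop_zero hx) hone]

theorem exists_Iio_subset_fDom_subset (hp : ∀ n, 1 ≤ p n) (hσ : ∀ n, 0 ≤ σ n)
    (hne : (fDom p σ).Nonempty) :
    ∃ α : ℝ, 0 ≤ α ∧ Iio (-α) ⊆ fDom p σ ∧ fDom p σ ⊆ Iio 0 ∩ closure (Iio (-α)) := by
  have hneg := fDom_subset_Iio_zero hp hσ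
  have hbdd : BddAbove (fDom p σ) := ⟨0, fun x hx => (hneg hx).le⟩
  refine ⟨-sSup (fDom p σ), ?_, ?_, fun x hx => ⟨hneg hx, ?_⟩⟩
  · exact neg_nonneg.2 (csSup_le hne fun x hx => (hneg hx).le)
  · rw [neg_neg]
    exact (isLowerSet_fDom (fun n => zero_le_one.trans (hp n)) hσ).Iio_csSup_subset hne
  · rw [neg_neg, closure_Iio]
    exact le_csSup hbdd hx

theorem fR_pos (hp : ∀ n, 0 < p n) (hx : x ∈ fDom p σ) : 0 < fR p σ x :=
  Summable.tsum_pos hx (fun n => (mul_pos (hp n) (exp_pos _)).le) 0 (mul_pos (hp 0) (exp_pos _))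

theorem strictConvexOn_fR (hp : ∀ n, 0 < p n) (hσ : ∀ n, 0 < σ n) :
    StrictConvexOn ℝ (fDom p σ) (fR p σ) := by
  have hconv : Convex ℝ (fDom p σ) :=
    (isLowerSet_fDom (fun n => (hp n).le) fun n => (hσ n).le).ordConnected.convex
  exact strictConvexOn_tsum hconv
    (fun n => (strictConvexOn_const_mul_exp_mul (hp n) (hσ n).ne').subset (subset_univ _) hconv)
    fun _ hx => hx

theorem strictMonoOn_fR (hp : ∀ n, 0 < p n) (hσ : ∀ n, 0 < σ n) :
    StrictMonoOn (fR p σ) (fDom p σ) :=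
  strictMonoOn_tsum (fun n => (strictMono_const_mul_exp_mul (hp n) (hσ n)).strictMonoOn _)
    fun _ hx => hx

theorem tendsto_fR_atBot (hp : ∀ n, 0 ≤ p n) (hσ : ∀ n, 0 < σ n) (hx : x ∈ fDom p σ) :
    Tendsto (fR p σ) atBot (𝓝 0) :=
  tendsto_tsum_mul_exp_atBot hp hσ hx

theorem sInf_fR_image_fDom (hp : ∀ n, 0 < p n) (hσ : ∀ n, 0 < σ n)
    (hα : Iio (-α) ⊆ fDom p σ) : sInf (fR p σ '' fDom p σ) = 0 := by
  refine IsGLB.csInf_eq ⟨?_, fun b hb => ?_⟩ ((nonempty_Iio.mono hα).image _)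
  · rintro _ ⟨y, hy, rfl⟩
    exact (fR_pos hp hy).le
  · by_contra! hb0
    have hlim := tendsto_fR_atBot (fun n => (hp n).le) hσ (hα (show -α - 1 < -α by linarith))
    obtain ⟨y, hyb, hy⟩ :=
      ((hlim.eventually (eventually_lt_nhds hb0)).and (eventually_lt_atBot (-α))).exists
    exact (hb (mem_image_of_mem _ (hα hy))).not_gt hyb

theorem summable_fD (hp : ∀ n, 0 ≤ p n) (hσ : ∀ n, 0 ≤ σ n) (hα : Iio (-α) ⊆ fDom p σ)
    (hx : x < -α) : Summable fun n => p n * σ n * exp (σ n * x) :=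
  let ⟨_, hxy, hy⟩ := exists_between hx
  summable_mul_mul_exp_of_lt hp hσ hxy (hα hy)

theorem hasDerivAt_fR (hp : ∀ n, 0 ≤ p n) (hσ : ∀ n, 0 ≤ σ n) (hα : Iio (-α) ⊆ fDom p σ)
    (hx : x < -α) : HasDerivAt (fR p σ) (fD p σ x) x :=
  let ⟨_, hxy, hy⟩ := exists_between hx
  hasDerivAt_tsum_mul_exp hp hσ hxy (hα hy)

theorem continuousOn_fD (hp : ∀ n, 0 ≤ p n) (hσ : ∀ n, 0 ≤ σ n) (hα : Iio (-α) ⊆ fDom p σ) :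
    ContinuousOn (fD p σ) (Iio (-α)) := fun x hx =>
  let ⟨_, hxy, hy⟩ := exists_between (show x < -α from hx)
  (hasDerivAt_tsum_mul_exp (c := fun n => p n * σ n) (fun n => mul_nonneg (hp n) (hσ n)) hσ hxy
    (summable_fD hp hσ hα hy)).continuousAt.continuousWithinAt

theorem strictMonoOn_fD (hp : ∀ n, 0 < p n) (hσ : ∀ n, 0 < σ n) (hα : Iio (-α) ⊆ fDom p σ) :
    StrictMonoOn (fD p σ) (Iio (-α)) :=
  strictMonoOn_tsum
    (fun n => (strictMono_const_mul_exp_mul (mul_pos (hp n) (hσ n)) (hσ n)).strictMonoOn _)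
    fun _ hx => summable_fD (fun n => (hp n).le) (fun n => (hσ n).le) hα hx

theorem tendsto_fD_atBot (hp : ∀ n, 0 ≤ p n) (hσ : ∀ n, 0 < σ n) (hα : Iio (-α) ⊆ fDom p σ) :
    Tendsto (fD p σ) atBot (𝓝 0) :=
  tendsto_tsum_mul_exp_atBot (c := fun n => p n * σ n) (fun n => mul_nonneg (hp n) (hσ n).le) hσ
    (summable_fD hp (fun n => (hσ n).le) hα (show -α - 1 < -α by linarith))

theorem fD_pos (hp : ∀ n, 0 < p n) (hσ : ∀ n, 0 < σ n) (hα : Iio (-α) ⊆ fDom p σ)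
    (hx : x < -α) : 0 < fD p σ x :=
  (summable_fD (fun n => (hp n).le) (fun n => (hσ n).le) hα hx).tsum_pos
    (fun n => (mul_pos (mul_pos (hp n) (hσ n)) (exp_pos _)).le) 0
    (mul_pos (mul_pos (hp 0) (hσ 0)) (exp_pos _))

theorem coe_fD_eq (hp : ∀ n, 0 ≤ p n) (hσ : ∀ n, 0 ≤ σ n)
    (hx : Summable fun n => p n * σ n * exp (σ n * x)) :
    (fD p σ x : EReal) = ((∑' n, ENNReal.ofReal (p n * σ n * exp (σ n * x)) : ℝ≥0∞) : EReal) := by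
  have hnonneg n : 0 ≤ p n * σ n * exp (σ n * x) :=
    mul_nonneg (mul_nonneg (hp n) (hσ n)) (exp_pos _).le
  rw [← ENNReal.ofReal_tsum_of_nonneg hnonneg hx, EReal.coe_ennreal_ofReal,
    max_eq_left (tsum_nonneg hnonneg), fD]

theorem tendsto_coe_fD_nhdsLT (hp : ∀ n, 0 ≤ p n) (hσ : ∀ n, 0 ≤ σ n)
    (hα : Iio (-α) ⊆ fDom p σ) :
    Tendsto (fun x => (fD p σ x : EReal)) (𝓝[<] (-α)) (𝓝 (gammaE p σ α)) := by
  refine ((continuous_coe_ennreal_ereal.tendsto _).comp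
    (tendsto_tsum_ofReal_mul_exp_nhdsLT (fun n => mul_nonneg (hp n) (hσ n)) hσ (-α))).congr' ?_
  filter_upwards [self_mem_nhdsWithin] with x hx
  exact (coe_fD_eq hp hσ (summable_fD hp hσ hα hx)).symm

theorem gammaE_pos (hp : ∀ n, 0 < p n) (hσ : ∀ n, 0 < σ n) : 0 < gammaE p σ α :=
  EReal.coe_ennreal_pos.2 <|
    (ENNReal.ofReal_pos.2 (mul_pos (mul_pos (hp 0) (hσ 0)) (exp_pos _))).trans_le
      (ENNReal.le_tsum 0)

theorem coe_fD_lt_gammaE (hp : ∀ n, 0 < p n) (hσ : ∀ n, 0 < σ n) (hα : Iio (-α) ⊆ fDom p σ)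
    (hx : x < -α) : (fD p σ x : EReal) < gammaE p σ α := by
  have hp' n := (hp n).le
  have hσ' n := (hσ n).le
  obtain ⟨y, hxy, hy⟩ := exists_between hx
  calc (fD p σ x : EReal) < fD p σ y := EReal.coe_lt_coe_iff.2 (strictMonoOn_fD hp hσ hα hx hy hxy)
    _ = _ := coe_fD_eq hp' hσ' (summable_fD hp' hσ' hα hy)
    _ ≤ gammaE p σ α := EReal.coe_ennreal_le_coe_ennreal_iff.2 <| ENNReal.tsum_le_tsum fun n =>
        ENNReal.ofReal_le_ofReal <|
          mul_exp_mul_le_mul_exp_mul (mul_nonneg (hp' n) (hσ' n)) (hσ' n) hy.le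

theorem image_fD_Iio (hp : ∀ n, 0 < p n) (hσ : ∀ n, 0 < σ n) (hα : Iio (-α) ⊆ fDom p σ) :
    fD p σ '' Iio (-α) = {y : ℝ | 0 < y ∧ (y : EReal) < gammaE p σ α} := by
  have hp' n := (hp n).le
  have hσ' n := (hσ n).le
  refine Subset.antisymm
    (image_subset_iff.2 fun x hx => ⟨fD_pos hp hσ hα hx, coe_fD_lt_gammaE hp hσ hα hx⟩)
    fun y hy => mem_image_Iio_of_tendsto (continuousOn_fD hp' hσ' hα) (tendsto_fD_atBot hp' hσ hα)
      (tendsto_coe_fD_nhdsLT hp' hσ' hα) hy.1 hy.2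

end DirichletSeries

theorem stmt11_general (p σ : ℕ → ℝ) (hp : ∀ n, 1 ≤ p n) (hσpos : ∀ n, 0 < σ n)
    (xbar : ℝ) (hxbar : xbar ∈ fDom p σ) :
    ∃ α : ℝ, 0 ≤ α ∧
      Set.Iio (-α) ⊆ fDom p σ ∧
      fDom p σ ⊆ Set.Iio 0 ∩ closure (Set.Iio (-α)) ∧
      StrictConvexOn ℝ (fDom p σ) (fR p σ) ∧
      StrictMonoOn (fR p σ) (fDom p σ) ∧
      Tendsto (fR p σ) atBot (nhds 0) ∧
      sInf (fR p σ '' fDom p σ) = 0 ∧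
      (∀ x ∈ Set.Iio (-α),
        (Summable fun n => p n * σ n * Real.exp (σ n * x)) ∧
        HasDerivAt (fR p σ) (fD p σ x) x) ∧
      StrictMonoOn (fD p σ) (Set.Iio (-α)) ∧
      ContinuousOn (fD p σ) (Set.Iio (-α)) ∧
      Tendsto (fD p σ) atBot (nhds 0) ∧
      Tendsto (fun x => ((fD p σ x : ℝ) : EReal)) (nhdsWithin (-α) (Set.Iio (-α)))
        (nhds (gammaE p σ α)) ∧
      (0 : EReal) < gammaE p σ α ∧
      fD p σ '' Set.Iio (-α) = {y : ℝ | 0 < y ∧ ((y : ℝ) : EReal) < gammaE p σ α} := by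
  have hp₀ n : 0 < p n := one_pos.trans_le (hp n)
  have hp₀' n : 0 ≤ p n := (hp₀ n).le
  have hσ' n : 0 ≤ σ n := (hσpos n).le
  obtain ⟨α, hα₀, hα, hdom⟩ := exists_Iio_subset_fDom_subset hp hσ' ⟨xbar, hxbar⟩
  exact ⟨α, hα₀, hα, hdom, strictConvexOn_fR hp₀ hσpos, strictMonoOn_fR hp₀ hσpos,
    tendsto_fR_atBot hp₀' hσpos hxbar, sInf_fR_image_fDom hp₀ hσpos hα,
    fun x hx => ⟨summable_fD hp₀' hσ' hα hx, hasDerivAt_fR hp₀' hσ' hα hx⟩,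
    strictMonoOn_fD hp₀ hσpos hα, continuousOn_fD hp₀' hσ' hα, tendsto_fD_atBot hp₀' hσpos hα,
    tendsto_coe_fD_nhdsLT hp₀' hσ' hα, gammaE_pos hp₀ hσpos, image_fD_Iio hp₀ hσpos hα⟩

/-- Properties of `f(x) = Σ p_n e^{σ_n x}` under the assumption `(A_{σf})`:
`(σ_n) ⊆ (0,∞)`, `σ_n → ∞`, and `dom f ≠ ∅`. -/
theorem stmt11 (p σ : ℕ → ℝ) (hp : ∀ n, 1 ≤ p n) (hσpos : ∀ n, 0 < σ n)
    (hσtop : Tendsto σ atTop atTop)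
    (xbar : ℝ) (hxbar : xbar ∈ fDom p σ) :
    ∃ α : ℝ, 0 ≤ α ∧
      Set.Iio (-α) ⊆ fDom p σ ∧
      fDom p σ ⊆ Set.Iio 0 ∩ closure (Set.Iio (-α)) ∧
      StrictConvexOn ℝ (fDom p σ) (fR p σ) ∧
      StrictMonoOn (fR p σ) (fDom p σ) ∧
      Tendsto (fR p σ) atBot (nhds 0) ∧
      sInf (fR p σ '' fDom p σ) = 0 ∧
      (∀ x ∈ Set.Iio (-α),
        (Summable fun n => p n * σ n * Real.exp (σ n * x)) ∧
        HasDerivAt (fR p σ) (fD p σ x) x) ∧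
      StrictMonoOn (fD p σ) (Set.Iio (-α)) ∧
      ContinuousOn (fD p σ) (Set.Iio (-α)) ∧
      Tendsto (fD p σ) atBot (nhds 0) ∧
      Tendsto (fun x => ((fD p σ x : ℝ) : EReal)) (nhdsWithin (-α) (Set.Iio (-α)))
        (nhds (gammaE p σ α)) ∧
      (0 : EReal) < gammaE p σ α ∧
      fD p σ '' Set.Iio (-α) = {y : ℝ | 0 < y ∧ ((y : ℝ) : EReal) < gammaE p σ α} :=
  stmt11_general p σ hp hσpos xbar hxbar
end

section
/- Let (p_n)_{n≥1} ⊆ [1,∞) and (σ_n)_{n≥1} ⊆ (0,∞) with σ_n → ∞, f(x) := Σ_{n≥1} p_n e^{σ_n x}, and let α > 0 be such that (−∞,−α) ⊆ dom f ⊆ (−∞,−α]. Set γ := Σ_{n≥1} p_n σ_n e^{−σ_n α} ∈ (0,∞]. Then exactly one of the following holds: (a) dom f = (−∞,−α) and γ = ∞; (b) dom f = (−∞,−α], γ = ∞, the left derivative of f at −α equals +∞, and ∂f(−α) = ∅; (c) dom f = (−∞,−α], γ < ∞, the left derivative of f at −α equals γ, and ∂f(−α) = [γ,∞). -/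
open Filter
open scoped ENNReal

/-- The extended-real-valued function `f(x) = Σ p_n e^{σ_n x} ∈ (0,+∞]` (value `+∞` when
the series diverges). -/
noncomputable def fE (p σ : ℕ → ℝ) (x : ℝ) : EReal :=
  ((∑' n, ENNReal.ofReal (p n * Real.exp (σ n * x)) : ℝ≥0∞) : EReal)

/-- The subdifferential of a function `g : ℝ → ℝ ∪ {±∞}` at `z`. -/
def subd (g : ℝ → EReal) (z : ℝ) : Set ℝ :=
  {t : ℝ | ∀ x : ℝ, g z + ((t * (x - z) : ℝ) : EReal) ≤ g x}

/-! Each term `aₙ(x) = pₙ e^{σₙ x}` is increasing and convex, with tangent-line inequality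
`aₙ(x) ≥ aₙ(z) + aₙ'(z)(x - z)`. Hence at a point `z` of the domain the left difference quotients
of `f` are series of termwise quotients lying in `[0, aₙ'(z)]` and tending to `aₙ'(z)`: by
Tannery's theorem (when `γ = Σ aₙ'(z) < ∞`) or by comparison with partial sums (when `γ = ∞`),
the left derivative of `f` at `z` is `γ`. A subgradient dominates every left quotient, so it is
at least `γ`; conversely, summing the tangent inequalities shows that every `t ≥ γ` is a
subgradient, because the domain lies to the left of `z`. Finally, if `z` is not in the domain then
`γ = ∞`, since `σₙ ≥ 1` eventually gives `aₙ(z) ≤ aₙ'(z)`. -/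

open Set Real Topology

theorem eq_Iic_of_Iio_subset_of_mem {α : Type*} [PartialOrder α] {s : Set α} {a : α}
    (h1 : Iio a ⊆ s) (h2 : s ⊆ Iic a) (ha : a ∈ s) : s = Iic a :=
  h2.antisymm (Iio_insert (a := a) ▸ insert_subset ha h1)

theorem eq_Iio_of_Iio_subset_of_notMem {α : Type*} [PartialOrder α] {s : Set α} {a : α}
    (h1 : Iio a ⊆ s) (h2 : s ⊆ Iic a) (ha : a ∉ s) : s = Iio a :=
  Subset.antisymm (fun _ hx => (h2 hx).lt_of_ne fun h => ha (h ▸ hx)) h1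

theorem coe_tsum_ofReal_of_summable {ι : Type*} {f : ι → ℝ} (hf : ∀ i, 0 ≤ f i)
    (hs : Summable f) :
    ((∑' i, ENNReal.ofReal (f i) : ℝ≥0∞) : EReal) = ((∑' i, f i : ℝ) : EReal) := by
  rw [← ENNReal.ofReal_tsum_of_nonneg hf hs, EReal.coe_ennreal_ofReal,
    max_eq_left (tsum_nonneg hf)]

theorem coe_tsum_ofReal_of_not_summable {ι : Type*} {f : ι → ℝ} (hf : ∀ i, 0 ≤ f i)
    (hs : ¬Summable f) : ((∑' i, ENNReal.ofReal (f i) : ℝ≥0∞) : EReal) = ⊤ := by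
  rw [EReal.coe_ennreal_eq_top_iff]
  by_contra h
  exact hs ((ENNReal.summable_toReal h).congr fun i => ENNReal.toReal_ofReal (hf i))

section ExpTerm

variable {c : ℝ}

theorem add_mul_sub_le_mul_exp (hc : 0 ≤ c) (s z x : ℝ) :
    c * exp (s * z) + c * s * exp (s * z) * (x - z) ≤ c * exp (s * x) := by
  have hexp : exp (s * x) = exp (s * z) * exp (s * (x - z)) := by rw [← exp_add]; ring_nf
  have := mul_le_mul_of_nonneg_left (add_one_le_exp (s * (x - z)))
    (mul_nonneg hc (exp_pos (s * z)).le)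
  rw [hexp]
  linarith

theorem slope_mul_exp_nonneg (hc : 0 ≤ c) {s : ℝ} (hs : 0 ≤ s) (z y : ℝ) :
    0 ≤ slope (fun x => c * exp (s * x)) z y := by
  have hmono : Monotone fun x => c * exp (s * x) := fun _ _ hxy =>
    mul_le_mul_of_nonneg_left (exp_le_exp.2 (mul_le_mul_of_nonneg_left hxy hs)) hc
  exact (hmono.monotoneOn univ).slope_nonneg trivial trivial

theorem slope_mul_exp_le (hc : 0 ≤ c) (s : ℝ) {z y : ℝ} (hyz : y < z) :
    slope (fun x => c * exp (s * x)) z y ≤ c * s * exp (s * z) := by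
  rw [slope_def_field, div_le_iff_of_neg (sub_neg.2 hyz)]
  linarith [add_mul_sub_le_mul_exp hc s z y]

theorem tendsto_slope_mul_exp (c s z : ℝ) :
    Tendsto (slope (fun x => c * exp (s * x)) z) (𝓝[<] z) (𝓝 (c * s * exp (s * z))) := by
  have hderiv : HasDerivAt (fun x => c * exp (s * x)) (c * s * exp (s * z)) z :=
    (((hasDerivAt_id' z).const_mul s).exp.const_mul c).congr_deriv (by ring)
  exact (hasDerivAt_iff_tendsto_slope.1 hderiv).mono_left
    (nhdsWithin_mono _ fun _ hx => ne_of_lt hx)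

end ExpTerm

theorem tendsto_tsum_atTop_of_not_summable {α : Type*} {l : Filter α} {f : α → ℕ → ℝ}
    {g : ℕ → ℝ} (hg : ∀ n, 0 ≤ g n) (hgs : ¬Summable g)
    (hfg : ∀ n, Tendsto (f · n) l (𝓝 (g n))) (hf : ∀ᶠ a in l, ∀ n, 0 ≤ f a n)
    (hfs : ∀ᶠ a in l, Summable (f a)) :
    Tendsto (fun a => ∑' n, f a n) l atTop := by
  refine tendsto_atTop.2 fun c => ?_
  obtain ⟨N, hN⟩ :=
    (((not_summable_iff_tendsto_nat_atTop_of_nonneg hg).1 hgs).eventually_gt_atTop c).exists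
  have hpartial : Tendsto (fun a => ∑ n ∈ Finset.range N, f a n) l
      (𝓝 (∑ n ∈ Finset.range N, g n)) :=
    tendsto_finsetSum _ fun n _ => hfg n
  filter_upwards [hpartial.eventually (eventually_gt_nhds hN), hf, hfs] with a hc hpos hsum
  exact hc.le.trans (hsum.sum_le_tsum _ fun n _ => hpos n)

section ExpSeries

variable {p σ : ℕ → ℝ}

theorem fE_of_mem_fDom (hp : ∀ n, 0 ≤ p n) {x : ℝ} (hx : x ∈ fDom p σ) :
    fE p σ x = fR p σ x :=
  coe_tsum_ofReal_of_summable (fun n => mul_nonneg (hp n) (exp_pos _).le) hx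

theorem fE_of_notMem_fDom (hp : ∀ n, 0 ≤ p n) {x : ℝ} (hx : x ∉ fDom p σ) : fE p σ x = ⊤ :=
  coe_tsum_ofReal_of_not_summable (fun n => mul_nonneg (hp n) (exp_pos _).le) hx

theorem gammaE_of_summable (hp : ∀ n, 0 ≤ p n) (hσ : ∀ n, 0 ≤ σ n) {α : ℝ}
    (hb : Summable fun n => p n * σ n * exp (σ n * (-α))) : gammaE p σ α = fD p σ (-α) :=
  coe_tsum_ofReal_of_summable (fun n => mul_nonneg (mul_nonneg (hp n) (hσ n)) (exp_pos _).le) hb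

theorem gammaE_of_not_summable (hp : ∀ n, 0 ≤ p n) (hσ : ∀ n, 0 ≤ σ n) {α : ℝ}
    (hb : ¬Summable fun n => p n * σ n * exp (σ n * (-α))) : gammaE p σ α = ⊤ :=
  coe_tsum_ofReal_of_not_summable
    (fun n => mul_nonneg (mul_nonneg (hp n) (hσ n)) (exp_pos _).le) hb

theorem mem_fDom_of_summable_deriv_series (hp : ∀ n, 0 ≤ p n) (hσ : Tendsto σ atTop atTop)
    {z : ℝ} (hb : Summable fun n => p n * σ n * exp (σ n * z)) : z ∈ fDom p σ := by
  refine hb.of_norm_bounded_eventually ?_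
  rw [Nat.cofinite_eq_atTop]
  filter_upwards [hσ.eventually_ge_atTop 1] with n hn
  have hterm : 0 ≤ p n * exp (σ n * z) := mul_nonneg (hp n) (exp_pos _).le
  rw [norm_of_nonneg hterm]
  nlinarith

theorem slope_fR_eq_tsum {y z : ℝ} (hy : y ∈ fDom p σ) (hz : z ∈ fDom p σ) :
    slope (fR p σ) z y = ∑' n, slope (fun x => p n * exp (σ n * x)) z y := by
  simp only [slope_def_field, fR]
  rw [← hy.tsum_sub hz, tsum_div_const]

variable (hp : ∀ n, 0 ≤ p n) {z : ℝ} (hz : z ∈ fDom p σ)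
include hp hz

theorem slope_fR_le_of_mem_subd {t y : ℝ} (ht : t ∈ subd (fE p σ) z) (hy : y ∈ fDom p σ)
    (hyz : y < z) : slope (fR p σ) z y ≤ t := by
  have h := ht y
  rw [fE_of_mem_fDom hp hy, fE_of_mem_fDom hp hz, ← EReal.coe_add, EReal.coe_le_coe_iff] at h
  rw [slope_def_field, div_le_iff_of_neg (sub_neg.2 hyz)]
  linarith

theorem fR_add_fD_mul_le {x : ℝ} (hx : x ∈ fDom p σ)
    (hb : Summable fun n => p n * σ n * exp (σ n * z)) :
    fR p σ z + fD p σ z * (x - z) ≤ fR p σ x := by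
  have h := (hz.add (hb.mul_right (x - z))).tsum_le_tsum
    (fun n => add_mul_sub_le_mul_exp (hp n) (σ n) z x) hx
  rwa [hz.tsum_add (hb.mul_right _), tsum_mul_right] at h

variable (hσ : ∀ n, 0 ≤ σ n) (h1 : Iio z ⊆ fDom p σ)
include hσ h1

theorem tendsto_slope_fR (hb : Summable fun n => p n * σ n * exp (σ n * z)) :
    Tendsto (slope (fR p σ) z) (𝓝[<] z) (𝓝 (fD p σ z)) := by
  refine (tendsto_tsum_of_dominated_convergence hb
    (fun n => tendsto_slope_mul_exp (p n) (σ n) z) ?_).congr' ?_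
  · filter_upwards [self_mem_nhdsWithin] with y (hy : y < z) n
    rw [norm_of_nonneg (slope_mul_exp_nonneg (hp n) (hσ n) z y)]
    exact slope_mul_exp_le (hp n) (σ n) hy
  · filter_upwards [self_mem_nhdsWithin] with y hy
    exact (slope_fR_eq_tsum (h1 hy) hz).symm

theorem tendsto_slope_fR_atTop (hb : ¬Summable fun n => p n * σ n * exp (σ n * z)) :
    Tendsto (slope (fR p σ) z) (𝓝[<] z) atTop := by
  refine (tendsto_tsum_atTop_of_not_summable
    (fun n => mul_nonneg (mul_nonneg (hp n) (hσ n)) (exp_pos _).le) hb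
    (fun n => tendsto_slope_mul_exp (p n) (σ n) z)
    (Eventually.of_forall fun y n => slope_mul_exp_nonneg (hp n) (hσ n) z y) ?_).congr' ?_
  · filter_upwards [self_mem_nhdsWithin] with y hy
    simpa only [slope_def_field] using ((h1 hy).sub hz).div_const (y - z)
  · filter_upwards [self_mem_nhdsWithin] with y hy
    exact (slope_fR_eq_tsum (h1 hy) hz).symm

theorem subd_fE_eq_Ici (h2 : fDom p σ ⊆ Iic z)
    (hb : Summable fun n => p n * σ n * exp (σ n * z)) :
    subd (fE p σ) z = Ici (fD p σ z) := by
  ext t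
  refine ⟨fun ht => ?_, fun ht x => ?_⟩
  · exact le_of_tendsto (tendsto_slope_fR hp hz hσ h1 hb)
      (eventually_nhdsWithin_of_forall fun y hy => slope_fR_le_of_mem_subd hp hz ht (h1 hy) hy)
  · by_cases hx : x ∈ fDom p σ
    · rw [fE_of_mem_fDom hp hx, fE_of_mem_fDom hp hz, ← EReal.coe_add, EReal.coe_le_coe_iff]
      have := mul_le_mul_of_nonpos_right (mem_Ici.1 ht) (sub_nonpos.2 (h2 hx))
      linarith [fR_add_fD_mul_le hp hz hx hb]
    · rw [fE_of_notMem_fDom hp hx]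
      exact le_top

theorem subd_fE_eq_empty (hb : ¬Summable fun n => p n * σ n * exp (σ n * z)) :
    subd (fE p σ) z = ∅ := by
  refine eq_empty_of_forall_notMem fun t ht => ?_
  obtain ⟨y, hty, hyz⟩ :=
    (((tendsto_slope_fR_atTop hp hz hσ h1 hb).eventually_gt_atTop t).and
      self_mem_nhdsWithin).exists
  exact (slope_fR_le_of_mem_subd hp hz ht (h1 hyz) hyz).not_gt hty

end ExpSeries

theorem stmt12_general (p σ : ℕ → ℝ) (hp : ∀ n, 1 ≤ p n) (hσpos : ∀ n, 0 < σ n)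
    (hσtop : Tendsto σ atTop atTop) (α : ℝ)
    (h1 : Set.Iio (-α) ⊆ fDom p σ) (h2 : fDom p σ ⊆ Set.Iic (-α)) :
    (fDom p σ = Set.Iio (-α) ∧ gammaE p σ α = ⊤) ∨
    (fDom p σ = Set.Iic (-α) ∧ gammaE p σ α = ⊤ ∧
      Tendsto (fun y => (fR p σ y - fR p σ (-α)) / (y - (-α)))
        (nhdsWithin (-α) (Set.Iio (-α))) atTop ∧
      subd (fE p σ) (-α) = ∅) ∨
    (fDom p σ = Set.Iic (-α) ∧ gammaE p σ α < ⊤ ∧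
      ∃ γ : ℝ, gammaE p σ α = ((γ : ℝ) : EReal) ∧
        Tendsto (fun y => (fR p σ y - fR p σ (-α)) / (y - (-α)))
          (nhdsWithin (-α) (Set.Iio (-α))) (nhds γ) ∧
        subd (fE p σ) (-α) = Set.Ici γ) := by
  have hp0 : ∀ n, 0 ≤ p n := fun n => zero_le_one.trans (hp n)
  have hσ0 : ∀ n, 0 ≤ σ n := fun n => (hσpos n).le
  have hslope : (fun y => (fR p σ y - fR p σ (-α)) / (y - (-α))) = slope (fR p σ) (-α) :=
    funext fun y => (slope_def_field _ _ _).symm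
  rw [hslope]
  by_cases hz : -α ∈ fDom p σ
  · have hdom := eq_Iic_of_Iio_subset_of_mem h1 h2 hz
    by_cases hb : Summable fun n => p n * σ n * exp (σ n * (-α))
    · have hγ := gammaE_of_summable hp0 hσ0 hb
      exact Or.inr <| Or.inr ⟨hdom, hγ ▸ EReal.coe_lt_top _, _, hγ,
        tendsto_slope_fR hp0 hz hσ0 h1 hb, subd_fE_eq_Ici hp0 hz hσ0 h1 h2 hb⟩
    · exact Or.inr <| Or.inl ⟨hdom, gammaE_of_not_summable hp0 hσ0 hb,
        tendsto_slope_fR_atTop hp0 hz hσ0 h1 hb, subd_fE_eq_empty hp0 hz hσ0 h1 hb⟩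
  · exact Or.inl ⟨eq_Iio_of_Iio_subset_of_notMem h1 h2 hz, gammaE_of_not_summable hp0 hσ0
      fun hb => hz (mem_fDom_of_summable_deriv_series hp0 hσtop hb)⟩

/-- Trichotomy for the behaviour of `f` at the endpoint `−α` of its domain. -/
theorem stmt12 (p σ : ℕ → ℝ) (hp : ∀ n, 1 ≤ p n) (hσpos : ∀ n, 0 < σ n)
    (hσtop : Tendsto σ atTop atTop) (α : ℝ) (hα : 0 < α)
    (h1 : Set.Iio (-α) ⊆ fDom p σ) (h2 : fDom p σ ⊆ Set.Iic (-α)) :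
    (fDom p σ = Set.Iio (-α) ∧ gammaE p σ α = ⊤) ∨
    (fDom p σ = Set.Iic (-α) ∧ gammaE p σ α = ⊤ ∧
      Tendsto (fun y => (fR p σ y - fR p σ (-α)) / (y - (-α)))
        (nhdsWithin (-α) (Set.Iio (-α))) atTop ∧
      subd (fE p σ) (-α) = ∅) ∨
    (fDom p σ = Set.Iic (-α) ∧ gammaE p σ α < ⊤ ∧
      ∃ γ : ℝ, gammaE p σ α = ((γ : ℝ) : EReal) ∧
        Tendsto (fun y => (fR p σ y - fR p σ (-α)) / (y - (-α)))
          (nhdsWithin (-α) (Set.Iio (-α))) (nhds γ) ∧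
        subd (fE p σ) (-α) = Set.Ici γ) :=
  stmt12_general p σ hp hσpos hσtop α h1 h2
end

section
/- Let (p_n)_{n≥1} ⊆ [1,∞) and (σ_n)_{n≥1} ⊆ (0,∞) with σ_n → ∞, assume dom f ≠ ∅ where f(x) := Σ_{n≥1} p_n e^{σ_n x}, and set θ_1 := min_n σ_n. For W ∈ {E_MB, E_FD, E_BE} define h_W(x,y) := Σ_{n≥1} p_n W*(x + σ_n y). Then each h_W is convex, lower semicontinuous and everywhere strictly positive; dom h_FD = dom h_MB = ℝ × dom f; and dom h_BE = {(x,y) ∈ ℝ × dom f : x + θ_1 y < 0}. -/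
open Filter
open scoped ENNReal

/-- `h_MB(x,y) = Σ_n p_n E_MB^*(x+σ_n y) = Σ_n p_n e^{x+σ_n y} ∈ (0,+∞]`. -/
noncomputable def hMBe (p σ : ℕ → ℝ) (z : ℝ × ℝ) : ℝ≥0∞ :=
  ∑' n, ENNReal.ofReal (p n * Real.exp (z.1 + σ n * z.2))

/-- `h_FD(x,y) = Σ_n p_n E_FD^*(x+σ_n y) = Σ_n p_n ln(1+e^{x+σ_n y}) ∈ (0,+∞]`. -/
noncomputable def hFDe (p σ : ℕ → ℝ) (z : ℝ × ℝ) : ℝ≥0∞ :=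
  ∑' n, ENNReal.ofReal (p n * Real.log (1 + Real.exp (z.1 + σ n * z.2)))

/-- `h_BE(x,y) = Σ_n p_n E_BE^*(x+σ_n y)`, where `E_BE^*(t) = −ln(1−e^t)` for `t < 0`
and `+∞` for `t ≥ 0`. -/
noncomputable def hBEe (p σ : ℕ → ℝ) (z : ℝ × ℝ) : ℝ≥0∞ :=
  ∑' n, if z.1 + σ n * z.2 < 0 then
    ENNReal.ofReal (p n * (-Real.log (1 - Real.exp (z.1 + σ n * z.2)))) else ⊤

open Set Real

section ConvexENN

variable {E : Type*} [AddCommGroup E] [Module ℝ E]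

def ConvexENN (g : E → ℝ≥0∞) : Prop :=
  ∀ z z' : E, ∀ l : ℝ, 0 ≤ l → l ≤ 1 →
    g (l • z + (1 - l) • z') ≤ ENNReal.ofReal l * g z + ENNReal.ofReal (1 - l) * g z'

theorem ConvexOn.convexENN_ofReal {φ : E → ℝ} (hφ : ConvexOn ℝ univ φ) :
    ConvexENN fun z => ENNReal.ofReal (φ z) := by
  intro z z' l h0 h1
  have h1' : 0 ≤ 1 - l := sub_nonneg.2 h1
  calc ENNReal.ofReal (φ (l • z + (1 - l) • z'))
      ≤ ENNReal.ofReal (l * φ z + (1 - l) * φ z') :=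
        ENNReal.ofReal_le_ofReal (hφ.2 (mem_univ z) (mem_univ z') h0 h1' (by ring))
    _ ≤ ENNReal.ofReal (l * φ z) + ENNReal.ofReal ((1 - l) * φ z') := ENNReal.ofReal_add_le
    _ = _ := by rw [ENNReal.ofReal_mul h0, ENNReal.ofReal_mul h1']

theorem ConvexENN.tsum {ι : Type*} {g : ι → E → ℝ≥0∞} (hg : ∀ i, ConvexENN (g i)) :
    ConvexENN fun z => ∑' i, g i z := by
  intro z z' l h0 h1
  rw [← ENNReal.tsum_mul_left, ← ENNReal.tsum_mul_left, ← ENNReal.tsum_add]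
  exact ENNReal.tsum_le_tsum fun i => hg i z z' l h0 h1

end ConvexENN

theorem ENNReal.tsum_ofReal_lt_top_iff {ι : Type*} {f : ι → ℝ} (hf : ∀ i, 0 ≤ f i) :
    ∑' i, ENNReal.ofReal (f i) < ∞ ↔ Summable f := by
  refine ⟨fun h => ?_, Summable.tsum_ofReal_lt_top⟩
  simpa only [ENNReal.toReal_ofReal (hf _)] using ENNReal.summable_toReal h.ne

theorem lowerSemicontinuous_tsum_ofReal {ι X : Type*} [TopologicalSpace X] {g : ι → X → ℝ}
    (hg : ∀ i, Continuous (g i)) : LowerSemicontinuous fun x => ∑' i, ENNReal.ofReal (g i x) :=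
  lowerSemicontinuous_tsum fun i => (ENNReal.continuous_ofReal.comp (hg i)).lowerSemicontinuous

theorem ConvexOn.const_mul_comp_fst_add_mul_snd {φ : ℝ → ℝ} (hφ : ConvexOn ℝ univ φ) {c : ℝ}
    (hc : 0 ≤ c) (b : ℝ) : ConvexOn ℝ univ fun z : ℝ × ℝ => c * φ (z.1 + b * z.2) := by
  simpa using (hφ.comp_linearMap (LinearMap.fst ℝ ℝ ℝ + b • LinearMap.snd ℝ ℝ ℝ)).smul hc

theorem convexOn_exp_const_mul (a : ℝ) : ConvexOn ℝ univ fun t => exp (a * t) :=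
  convexOn_exp.comp_linearMap (LinearMap.mulLeft ℝ a)

theorem hasDerivAt_log_one_add_exp (t : ℝ) :
    HasDerivAt (fun t => log (1 + exp t)) (exp t / (1 + exp t)) t :=
  ((hasDerivAt_exp t).const_add 1).log (by positivity)

theorem convexOn_log_one_add_exp : ConvexOn ℝ univ fun t => log (1 + exp t) := by
  refine Monotone.convexOn_univ_of_deriv
    (fun t => (hasDerivAt_log_one_add_exp t).differentiableAt) fun a b hab => ?_
  simp only [(hasDerivAt_log_one_add_exp _).deriv]
  rw [div_le_div_iff₀ (by positivity) (by positivity)]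
  nlinarith [exp_le_exp.2 hab]

theorem convexENN_lsc_pos_of_eq_tsum {ι : Type*} [Nonempty ι] {F : ℝ × ℝ → ℝ≥0∞}
    {c b : ι → ℝ} {φ : ι → ℝ → ℝ} (hc : ∀ i, 0 < c i) (hconv : ∀ i, ConvexOn ℝ univ (φ i))
    (hcont : ∀ i, Continuous (φ i)) (hpos : ∀ i t, 0 < φ i t)
    (hF : F = fun z => ∑' i, ENNReal.ofReal (c i * φ i (z.1 + b i * z.2))) :
    ConvexENN F ∧ LowerSemicontinuous F ∧ ∀ z, 0 < F z := by
  subst hF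
  refine ⟨ConvexENN.tsum fun i =>
      ((hconv i).const_mul_comp_fst_add_mul_snd (hc i).le _).convexENN_ofReal,
    lowerSemicontinuous_tsum_ofReal fun i => by fun_prop, fun z => ?_⟩
  obtain ⟨i⟩ := ‹Nonempty ι›
  exact (ENNReal.ofReal_pos.2 (mul_pos (hc i) (hpos i _))).trans_le (ENNReal.le_tsum i)

theorem ite_ofReal_mul_neg_log_one_sub_exp {c : ℝ} (hc : 0 < c) (t : ℝ) :
    (if t < 0 then ENNReal.ofReal (c * -log (1 - exp t)) else ⊤) =
      ∑' k : ℕ, ENNReal.ofReal (c / (k + 1) * exp ((k + 1) * t)) := by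
  have hterm (k : ℕ) : c * (exp t ^ (k + 1) / (k + 1)) = c / (k + 1) * exp ((k + 1) * t) := by
    rw [← exp_nat_mul]; push_cast; ring
  split_ifs with ht
  · have hs := (hasSum_pow_div_log_of_abs_lt_one (x := exp t) (by
      rwa [abs_of_pos (exp_pos t), exp_lt_one_iff])).mul_left c
    rw [← hs.tsum_eq, ENNReal.ofReal_tsum_of_nonneg (fun k => by positivity) hs.summable]
    simp only [hterm]
  · refine (not_lt_top_iff.1 ?_).symm
    rw [ENNReal.tsum_ofReal_lt_top_iff fun k => by positivity]
    intro hsum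
    have hharm : Summable fun k : ℕ => c / ((k : ℝ) + 1) :=
      hsum.of_nonneg_of_le (fun k => by positivity)
        fun k => le_mul_of_one_le_right (by positivity)
          (one_le_exp (mul_nonneg (by positivity) (not_lt.1 ht)))
    refine Real.not_summable_one_div_natCast ((summable_nat_add_iff 1).1 ?_)
    simpa [div_eq_mul_inv, hc.ne'] using hharm.mul_left c⁻¹

theorem le_neg_log_one_sub {u : ℝ} (hu : u < 1) : u ≤ -log (1 - u) := by
  linarith [log_le_sub_one_of_pos (sub_pos.2 hu)]

theorem neg_log_one_sub_le {u : ℝ} (hu : u < 1) : -log (1 - u) ≤ u / (1 - u) := by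
  have h := one_sub_inv_le_log_of_pos (sub_pos.2 hu)
  have he : 1 - (1 - u)⁻¹ = -(u / (1 - u)) := by field_simp [(sub_pos.2 hu).ne']; ring
  linarith

theorem log_one_add_le_self {u : ℝ} (hu : 0 ≤ u) : log (1 + u) ≤ u := by
  linarith [log_le_sub_one_of_pos (by linarith : 0 < 1 + u)]

section Domains

variable {p σ : ℕ → ℝ}

theorem Summable.of_mul_log_one_add {u : ℕ → ℝ} (hp : ∀ n, 1 ≤ p n) (hu : ∀ n, 0 ≤ u n)
    (h : Summable fun n => p n * log (1 + u n)) : Summable fun n => p n * u n := by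
  refine (h.mul_left 2).of_norm_bounded_eventually_nat ?_
  filter_upwards [h.tendsto_atTop_zero.eventually_lt_const (log_pos one_lt_two)] with n hn
  have hlog : log (1 + u n) < log 2 :=
    (le_mul_of_one_le_left (log_nonneg (by linarith [hu n])) (hp n)).trans_lt hn
  have hu1 : u n < 1 := by linarith [(log_lt_log_iff (by linarith [hu n]) two_pos).1 hlog]
  have hbound := le_log_one_add_of_nonneg (hu n)
  have hu2 : u n ≤ 2 * log (1 + u n) := by
    have := (div_le_iff₀ (by linarith [hu n])).1 hbound
    nlinarith [hu n, log_nonneg (by linarith [hu n] : 1 ≤ 1 + u n)]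
  rw [Real.norm_of_nonneg (mul_nonneg (by linarith [hp n]) (hu n))]
  nlinarith [mul_le_mul_of_nonneg_left hu2 (zero_le_one.trans (hp n))]

theorem summable_mul_exp_add_mul_iff (x y : ℝ) :
    Summable (fun n => p n * exp (x + σ n * y)) ↔ y ∈ fDom p σ := by
  simp only [exp_add, mul_left_comm _ (exp x)]
  exact summable_mul_left_iff (exp_pos x).ne'

theorem fDom_subset_Iio (hp : ∀ n, 1 ≤ p n) (hσ : ∀ n, 0 < σ n) : fDom p σ ⊆ Iio 0 := by
  intro y hy
  rw [mem_Iio]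
  by_contra! hy0
  obtain ⟨n, hn⟩ := (hy.tendsto_atTop_zero.eventually_lt_const one_pos).exists
  have := one_le_mul_of_one_le_of_one_le (hp n) (one_le_exp (mul_nonneg (hσ n).le hy0))
  linarith

theorem hMBe_lt_top_iff (hp : ∀ n, 0 ≤ p n) (z : ℝ × ℝ) : hMBe p σ z < ⊤ ↔ z.2 ∈ fDom p σ :=
  (ENNReal.tsum_ofReal_lt_top_iff fun n => mul_nonneg (hp n) (exp_pos _).le).trans
    (summable_mul_exp_add_mul_iff _ _)

theorem hFDe_le_hMBe (hp : ∀ n, 0 ≤ p n) (z : ℝ × ℝ) : hFDe p σ z ≤ hMBe p σ z :=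
  ENNReal.tsum_le_tsum fun n => ENNReal.ofReal_le_ofReal
    (mul_le_mul_of_nonneg_left (log_one_add_le_self (exp_pos _).le) (hp n))

theorem hFDe_lt_top_iff (hp : ∀ n, 1 ≤ p n) (z : ℝ × ℝ) : hFDe p σ z < ⊤ ↔ z.2 ∈ fDom p σ := by
  have hp0 (n : ℕ) : 0 ≤ p n := zero_le_one.trans (hp n)
  refine ⟨fun h => ?_, fun h => (hFDe_le_hMBe hp0 z).trans_lt ((hMBe_lt_top_iff hp0 z).2 h)⟩
  rw [hFDe, ENNReal.tsum_ofReal_lt_top_iff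
    fun n => mul_nonneg (hp0 n) (log_nonneg (by linarith [exp_pos (z.1 + σ n * z.2)]))] at h
  exact (summable_mul_exp_add_mul_iff _ _).1 (h.of_mul_log_one_add hp fun n => (exp_pos _).le)

theorem hMBe_le_hBEe (hp : ∀ n, 0 ≤ p n) (z : ℝ × ℝ) : hMBe p σ z ≤ hBEe p σ z :=
  ENNReal.tsum_le_tsum fun n => by
    split_ifs with ht
    · exact ENNReal.ofReal_le_ofReal
        (mul_le_mul_of_nonneg_left (le_neg_log_one_sub (exp_lt_one_iff.2 ht)) (hp n))
    · exact le_top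

theorem hBEe_le_mul_hMBe (hp : ∀ n, 0 ≤ p n) {m : ℕ} (hm : ∀ n, σ m ≤ σ n) {z : ℝ × ℝ}
    (hy : z.2 ≤ 0) (hz : z.1 + σ m * z.2 < 0) :
    hBEe p σ z ≤ ENNReal.ofReal (1 - exp (z.1 + σ m * z.2))⁻¹ * hMBe p σ z := by
  have hgap : 0 < 1 - exp (z.1 + σ m * z.2) := sub_pos.2 (exp_lt_one_iff.2 hz)
  rw [hMBe, ← ENNReal.tsum_mul_left]
  refine ENNReal.tsum_le_tsum fun n => ?_
  have htn : z.1 + σ n * z.2 ≤ z.1 + σ m * z.2 := by nlinarith [hm n]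
  have hexp : exp (z.1 + σ n * z.2) < 1 := exp_lt_one_iff.2 (htn.trans_lt hz)
  rw [if_pos (htn.trans_lt hz), ← ENNReal.ofReal_mul (inv_nonneg.2 hgap.le)]
  refine ENNReal.ofReal_le_ofReal ?_
  calc p n * -log (1 - exp (z.1 + σ n * z.2))
      ≤ p n * (exp (z.1 + σ n * z.2) / (1 - exp (z.1 + σ n * z.2))) :=
        mul_le_mul_of_nonneg_left (neg_log_one_sub_le hexp) (hp n)
    _ ≤ p n * (exp (z.1 + σ n * z.2) / (1 - exp (z.1 + σ m * z.2))) := by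
        have := hp n
        gcongr
    _ = (1 - exp (z.1 + σ m * z.2))⁻¹ * (p n * exp (z.1 + σ n * z.2)) := by ring

theorem hBEe_lt_top_iff (hp : ∀ n, 1 ≤ p n) (hσ : ∀ n, 0 < σ n) {m : ℕ} (hm : ∀ n, σ m ≤ σ n)
    (z : ℝ × ℝ) : hBEe p σ z < ⊤ ↔ z.2 ∈ fDom p σ ∧ z.1 + σ m * z.2 < 0 := by
  have hp0 (n : ℕ) : 0 ≤ p n := zero_le_one.trans (hp n)
  constructor
  · intro h
    refine ⟨(hMBe_lt_top_iff hp0 z).1 ((hMBe_le_hBEe hp0 z).trans_lt h), ?_⟩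
    by_contra hm'
    have hterm := (ENNReal.le_tsum m).trans_lt h
    rw [if_neg hm'] at hterm
    exact lt_irrefl _ hterm
  · rintro ⟨hy, hz⟩
    exact (hBEe_le_mul_hMBe hp0 hm (fDom_subset_Iio hp hσ hy).le hz).trans_lt
      (ENNReal.mul_lt_top ENNReal.ofReal_lt_top ((hMBe_lt_top_iff hp0 z).2 hy))

theorem hBEe_eq_tsum (hp : ∀ n, 0 < p n) : hBEe p σ = fun z =>
    ∑' i : ℕ × ℕ, ENNReal.ofReal (p i.1 / (i.2 + 1) * exp ((i.2 + 1) * (z.1 + σ i.1 * z.2))) := by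
  funext z
  rw [hBEe, ENNReal.tsum_prod']
  exact tsum_congr fun n => ite_ofReal_mul_neg_log_one_sub_exp (hp n) _

end Domains

theorem stmt13_general (p σ : ℕ → ℝ) (hp : ∀ n, 1 ≤ p n) (hσpos : ∀ n, 0 < σ n)
    (hσtop : Tendsto σ atTop atTop) :
    (∀ h ∈ ({hMBe p σ, hFDe p σ, hBEe p σ} : Set (ℝ × ℝ → ℝ≥0∞)),
      (∀ z z' : ℝ × ℝ, ∀ l : ℝ, 0 ≤ l → l ≤ 1 →
        h (l • z + (1 - l) • z') ≤ ENNReal.ofReal l * h z + ENNReal.ofReal (1 - l) * h z') ∧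
      LowerSemicontinuous h ∧ (∀ z, 0 < h z)) ∧
    {z : ℝ × ℝ | hFDe p σ z < ⊤} = Set.univ ×ˢ fDom p σ ∧
    {z : ℝ × ℝ | hMBe p σ z < ⊤} = Set.univ ×ˢ fDom p σ ∧
    {z : ℝ × ℝ | hBEe p σ z < ⊤} =
      {z : ℝ × ℝ | z.2 ∈ fDom p σ ∧ z.1 + sInf (Set.range σ) * z.2 < 0} := by
  have hp0 (n : ℕ) : 0 < p n := one_pos.trans_le (hp n)
  obtain ⟨m, hm⟩ := (Nat.cofinite_eq_atTop ▸ hσtop).exists_forall_le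
  have hθ : sInf (Set.range σ) = σ m := IsLeast.csInf_eq ⟨mem_range_self m, forall_mem_range.2 hm⟩
  refine ⟨?_, ?_, ?_, ?_⟩
  · simp only [Set.mem_insert_iff, Set.mem_singleton_iff, forall_eq_or_imp, forall_eq]
    exact ⟨convexENN_lsc_pos_of_eq_tsum (b := σ) hp0 (fun _ => convexOn_exp)
        (fun _ => continuous_exp) (fun _ => exp_pos) rfl,
      convexENN_lsc_pos_of_eq_tsum (b := σ) hp0 (fun _ => convexOn_log_one_add_exp)
        (fun _ => (continuous_const.add continuous_exp).log
          fun t => (add_pos one_pos (exp_pos t)).ne')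
        (fun _ t => log_pos (lt_add_of_pos_right 1 (exp_pos t))) rfl,
      convexENN_lsc_pos_of_eq_tsum (fun i : ℕ × ℕ => div_pos (hp0 i.1) (Nat.cast_add_one_pos i.2))
        (fun _ => convexOn_exp_const_mul _) (fun _ => by fun_prop) (fun _ _ => exp_pos _)
        (hBEe_eq_tsum hp0)⟩
  · exact Set.ext fun z => by simpa using hFDe_lt_top_iff hp z
  · exact Set.ext fun z => by simpa using hMBe_lt_top_iff (fun n => (hp0 n).le) z
  · exact Set.ext fun z => by simpa [hθ] using hBEe_lt_top_iff hp hσpos hm z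

/-- Under `(A_{σf})`, each `h_W` is convex, lower semicontinuous and strictly positive;
`dom h_FD = dom h_MB = ℝ × dom f` and `dom h_BE = {(x,y) ∈ ℝ × dom f : x + θ₁ y < 0}`,
`θ₁ := min_n σ_n = inf_n σ_n`. -/
theorem stmt13 (p σ : ℕ → ℝ) (hp : ∀ n, 1 ≤ p n) (hσpos : ∀ n, 0 < σ n)
    (hσtop : Tendsto σ atTop atTop) (hne : (fDom p σ).Nonempty) :
    (∀ h ∈ ({hMBe p σ, hFDe p σ, hBEe p σ} : Set (ℝ × ℝ → ℝ≥0∞)),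
      (∀ z z' : ℝ × ℝ, ∀ l : ℝ, 0 ≤ l → l ≤ 1 →
        h (l • z + (1 - l) • z') ≤ ENNReal.ofReal l * h z + ENNReal.ofReal (1 - l) * h z') ∧
      LowerSemicontinuous h ∧ (∀ z, 0 < h z)) ∧
    {z : ℝ × ℝ | hFDe p σ z < ⊤} = Set.univ ×ˢ fDom p σ ∧
    {z : ℝ × ℝ | hMBe p σ z < ⊤} = Set.univ ×ˢ fDom p σ ∧
    {z : ℝ × ℝ | hBEe p σ z < ⊤} =
      {z : ℝ × ℝ | z.2 ∈ fDom p σ ∧ z.1 + sInf (Set.range σ) * z.2 < 0} :=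
  stmt13_general p σ hp hσpos hσtop
end
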